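/- arXiv:2401.03713 — 6 statements merged into one kernel-verified Lean document; each statement's English description precedes it below -/
import Mathlib

section
/- With $H^{1,2}_{n,x,y}$ as defined (parts $R,S,T$ of sizes $x$, $2x+y$, $n-3x-y$), the maximum size of an independent set of vertices in $H^{1,2}_{n,x,y}$ is $x+1$, where a set is independent if no two of its vertices lie in a common edge. -/
open Finset

/-- The independence number of `H^{1,2}_{n,x,y}` is `x + 1`. -/
theorem stmt1 {V : Type*} [Fintype V] [DecidableEq V]
    (n x y : ℕ) (hx : 1 ≤ x) (hy : 1 ≤ y) (hn : 3 * x + 3 * y + 3 ≤ n)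
    (hcard : Fintype.card V = n)
    (R S T : Finset V) (hRS : Disjoint R S) (hRT : Disjoint R T) (hST : Disjoint S T)
    (hunion : R ∪ S ∪ T = Finset.univ)
    (hR : R.card = x) (hS : S.card = 2 * x + y) (hT : T.card = n - 3 * x - y)
    (E : Finset (Finset V))
    (hE : ∀ e, e ∈ E ↔ e.card = 3 ∧
      (((e ∩ R).card = 1 ∧ (e ∩ T).card = 2) ∨
       ((e ∩ S).card = 1 ∧ (e ∩ T).card = 2) ∨
       ((e ∩ T).card = 1 ∧ (e ∩ S).card = 2) ∨
       (e ∩ T).card = 3)) :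
    IsGreatest {m : ℕ | ∃ I : Finset V, I.card = m ∧
      ∀ u ∈ I, ∀ v ∈ I, u ≠ v → ¬ ∃ e ∈ E, u ∈ e ∧ v ∈ e} (x + 1) := by
  have hTcard : 2 * y + 3 ≤ T.card := by rw [hT]; omega
  -- key counting fact: cards of intersections with R, S, T sum to card e
  have key : ∀ e : Finset V, (e ∩ R).card + (e ∩ S).card + (e ∩ T).card = e.card := by
    intro e
    have h1 : e ∩ R ∪ e ∩ S ∪ e ∩ T = e := by
      rw [← Finset.inter_union_distrib_left, ← Finset.inter_union_distrib_left, hunion,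
        Finset.inter_univ]
    have d1 : Disjoint (e ∩ R) (e ∩ S) :=
      hRS.mono (Finset.inter_subset_right) (Finset.inter_subset_right)
    have d2 : Disjoint (e ∩ R ∪ e ∩ S) (e ∩ T) :=
      Finset.disjoint_union_left.mpr
        ⟨hRT.mono Finset.inter_subset_right Finset.inter_subset_right,
         hST.mono Finset.inter_subset_right Finset.inter_subset_right⟩
    calc (e ∩ R).card + (e ∩ S).card + (e ∩ T).card
        = (e ∩ R ∪ e ∩ S).card + (e ∩ T).card := by rw [Finset.card_union_of_disjoint d1]
      _ = (e ∩ R ∪ e ∩ S ∪ e ∩ T).card := by rw [Finset.card_union_of_disjoint d2]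
      _ = e.card := by rw [h1]
  constructor
  · -- lower bound: R ∪ {s} is independent of size x + 1
    obtain ⟨s, hsS⟩ := Finset.card_pos.mp (by omega : 0 < S.card)
    have hsR : s ∉ R := Finset.disjoint_right.mp hRS hsS
    refine ⟨insert s R, by rw [Finset.card_insert_of_notMem hsR, hR], ?_⟩
    rintro u hu v hv huv ⟨e, heE, hue, hve⟩
    obtain ⟨he3, hcase⟩ := (hE e).mp heE
    have hsum := key e
    -- both u and v are in e ∩ (R ∪ S)
    have hmem : ∀ w ∈ insert s R, w ∈ e → w ∈ e ∩ R ∪ e ∩ S := by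
      intro w hw hwe
      rcases Finset.mem_insert.mp hw with h | h
      · exact Finset.mem_union_right _ (Finset.mem_inter.mpr ⟨hwe, h ▸ hsS⟩)
      · exact Finset.mem_union_left _ (Finset.mem_inter.mpr ⟨hwe, h⟩)
    have hRS2 : 2 ≤ (e ∩ R).card + (e ∩ S).card := by
      rw [← Finset.card_union_of_disjoint
        (hRS.mono Finset.inter_subset_right Finset.inter_subset_right)]
      have : ({u, v} : Finset V) ⊆ e ∩ R ∪ e ∩ S := by
        intro w hw
        rcases Finset.mem_insert.mp hw with h | h
        · exact h ▸ hmem u hu hue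
        · exact (Finset.mem_singleton.mp h) ▸ hmem v hv hve
      calc 2 = ({u, v} : Finset V).card := (Finset.card_pair huv).symm
        _ ≤ _ := Finset.card_le_card this
    have hR1 : 1 ≤ (e ∩ R).card := by
      -- at least one of u, v is in R
      have : u ∈ R ∨ v ∈ R := by
        rcases Finset.mem_insert.mp hu with h | h
        · rcases Finset.mem_insert.mp hv with h' | h'
          · exact absurd (h.trans h'.symm) huv
          · exact Or.inr h'
        · exact Or.inl h
      rcases this with h | h
      · exact Finset.card_pos.mpr ⟨u, Finset.mem_inter.mpr ⟨hue, h⟩⟩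
      · exact Finset.card_pos.mpr ⟨v, Finset.mem_inter.mpr ⟨hve, h⟩⟩
    omega
  · -- upper bound
    rintro m ⟨I, hIcard, hind⟩
    -- I ∩ (S ∪ T) has at most one element
    have hSTle : (I ∩ (S ∪ T)).card ≤ 1 := by
      rw [Finset.card_le_one]
      intro u hu v hv
      by_contra hne
      obtain ⟨huI, huST⟩ := Finset.mem_inter.mp hu
      obtain ⟨hvI, hvST⟩ := Finset.mem_inter.mp hv
      apply hind u huI v hvI hne
      -- build an edge containing u and v
      have hTne : ∀ (a b : V), (T \ {a, b}).Nonempty := by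
        intro a b
        rw [Finset.sdiff_nonempty]
        intro hsub
        have := Finset.card_le_card hsub
        have h2 : ({a, b} : Finset V).card ≤ 2 := Finset.card_insert_le _ _ |>.trans (by simp)
        omega
      have hdisjST := Finset.disjoint_left.mp hST
      rcases Finset.mem_union.mp huST with huS | huT
      · rcases Finset.mem_union.mp hvST with hvS | hvT
        · -- both in S: edge {u, v, w}, w ∈ T
          obtain ⟨w, hw⟩ := hTne u v
          have hwT : w ∈ T := (Finset.mem_sdiff.mp hw).1
          have hwuv : w ∉ ({u, v} : Finset V) := (Finset.mem_sdiff.mp hw).2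
          have hwu : w ≠ u := fun h => hwuv (by simp [h])
          have hwv : w ≠ v := fun h => hwuv (by simp [h])
          refine ⟨{u, v, w}, ?_, by simp, by simp⟩
          rw [hE]
          have heT : ({u, v, w} : Finset V) ∩ T = {w} := by
            ext a
            simp only [Finset.mem_inter, Finset.mem_insert, Finset.mem_singleton]
            constructor
            · rintro ⟨h | h | h, haT⟩
              · exact absurd haT (h ▸ hdisjST huS)
              · exact absurd haT (h ▸ hdisjST hvS)
              · exact h
            · rintro rfl; exact ⟨Or.inr (Or.inr rfl), hwT⟩
          have heS : ({u, v, w} : Finset V) ∩ S = {u, v} := by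
            ext a
            simp only [Finset.mem_inter, Finset.mem_insert, Finset.mem_singleton]
            constructor
            · rintro ⟨h | h | h, haS⟩
              · exact Or.inl h
              · exact Or.inr h
              · exact absurd hwT (h ▸ fun hT' => hdisjST haS hT')
            · rintro (rfl | rfl)
              · exact ⟨Or.inl rfl, huS⟩
              · exact ⟨Or.inr (Or.inl rfl), hvS⟩
          refine ⟨?_, Or.inr (Or.inr (Or.inl ⟨by rw [heT]; simp, by rw [heS]; exact Finset.card_pair hne⟩))⟩
          rw [Finset.card_insert_of_notMem (by simp [hne, Ne.symm hwu]),
            Finset.card_insert_of_notMem (by simp [Ne.symm hwv]), Finset.card_singleton]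
        · -- u ∈ S, v ∈ T: edge {u, v, w}, w ∈ T \ {v}
          obtain ⟨w, hw⟩ := hTne v v
          have hwT : w ∈ T := (Finset.mem_sdiff.mp hw).1
          have hwv : w ≠ v := fun h => (Finset.mem_sdiff.mp hw).2 (by simp [h])
          have hwu : w ≠ u := fun h => hdisjST huS (h ▸ hwT)
          have huv' : u ≠ v := hne
          refine ⟨{u, v, w}, ?_, by simp, by simp⟩
          rw [hE]
          have heT : ({u, v, w} : Finset V) ∩ T = {v, w} := by
            ext a
            simp only [Finset.mem_inter, Finset.mem_insert, Finset.mem_singleton]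
            constructor
            · rintro ⟨h | h | h, haT⟩
              · exact absurd haT (h ▸ hdisjST huS)
              · exact Or.inl h
              · exact Or.inr h
            · rintro (rfl | rfl)
              · exact ⟨Or.inr (Or.inl rfl), hvT⟩
              · exact ⟨Or.inr (Or.inr rfl), hwT⟩
          have heS : ({u, v, w} : Finset V) ∩ S = {u} := by
            ext a
            simp only [Finset.mem_inter, Finset.mem_insert, Finset.mem_singleton]
            constructor
            · rintro ⟨h | h | h, haS⟩
              · exact h
              · exact absurd hvT (h ▸ fun hT' => hdisjST haS hT')
              · exact absurd hwT (h ▸ fun hT' => hdisjST haS hT')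
            · rintro rfl; exact ⟨Or.inl rfl, huS⟩
          refine ⟨?_, Or.inr (Or.inl ⟨by rw [heS]; simp, by rw [heT]; exact Finset.card_pair hwv.symm⟩)⟩
          rw [Finset.card_insert_of_notMem (by simp [hne, Ne.symm hwu]),
            Finset.card_insert_of_notMem (by simp [Ne.symm hwv]), Finset.card_singleton]
      · rcases Finset.mem_union.mp hvST with hvS | hvT
        · -- u ∈ T, v ∈ S: edge {u, v, w}, w ∈ T \ {u}
          obtain ⟨w, hw⟩ := hTne u u
          have hwT : w ∈ T := (Finset.mem_sdiff.mp hw).1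
          have hwu : w ≠ u := fun h => (Finset.mem_sdiff.mp hw).2 (by simp [h])
          have hwv : w ≠ v := fun h => hdisjST hvS (h ▸ hwT)
          refine ⟨{u, v, w}, ?_, by simp, by simp⟩
          rw [hE]
          have heT : ({u, v, w} : Finset V) ∩ T = {u, w} := by
            ext a
            simp only [Finset.mem_inter, Finset.mem_insert, Finset.mem_singleton]
            constructor
            · rintro ⟨h | h | h, haT⟩
              · exact Or.inl h
              · exact absurd haT (h ▸ hdisjST hvS)
              · exact Or.inr h
            · rintro (rfl | rfl)
              · exact ⟨Or.inl rfl, huT⟩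
              · exact ⟨Or.inr (Or.inr rfl), hwT⟩
          have heS : ({u, v, w} : Finset V) ∩ S = {v} := by
            ext a
            simp only [Finset.mem_inter, Finset.mem_insert, Finset.mem_singleton]
            constructor
            · rintro ⟨h | h | h, haS⟩
              · exact absurd huT (h ▸ fun hT' => hdisjST haS hT')
              · exact h
              · exact absurd hwT (h ▸ fun hT' => hdisjST haS hT')
            · rintro rfl; exact ⟨Or.inr (Or.inl rfl), hvS⟩
          refine ⟨?_, Or.inr (Or.inl ⟨by rw [heS]; simp, by rw [heT]; exact Finset.card_pair hwu.symm⟩)⟩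
          rw [Finset.card_insert_of_notMem (by simp [hne, Ne.symm hwu]),
            Finset.card_insert_of_notMem (by simp [Ne.symm hwv]), Finset.card_singleton]
        · -- both in T: edge {u, v, w}, w ∈ T \ {u, v}
          obtain ⟨w, hw⟩ := hTne u v
          have hwT : w ∈ T := (Finset.mem_sdiff.mp hw).1
          have hwuv : w ∉ ({u, v} : Finset V) := (Finset.mem_sdiff.mp hw).2
          have hwu : w ≠ u := fun h => hwuv (by simp [h])
          have hwv : w ≠ v := fun h => hwuv (by simp [h])
          refine ⟨{u, v, w}, ?_, by simp, by simp⟩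
          rw [hE]
          have he3 : ({u, v, w} : Finset V).card = 3 := by
            rw [Finset.card_insert_of_notMem (by simp [hne, Ne.symm hwu]),
              Finset.card_insert_of_notMem (by simp [Ne.symm hwv]), Finset.card_singleton]
          have heT : ({u, v, w} : Finset V) ∩ T = {u, v, w} := by
            apply Finset.inter_eq_left.mpr
            intro a ha
            rcases Finset.mem_insert.mp ha with h | h
            · exact h ▸ huT
            · rcases Finset.mem_insert.mp h with h' | h'
              · exact h' ▸ hvT
              · exact (Finset.mem_singleton.mp h') ▸ hwT
          exact ⟨he3, Or.inr (Or.inr (Or.inr (by rw [heT, he3])))⟩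
    -- combine
    have hsplit : I = I ∩ R ∪ I ∩ (S ∪ T) := by
      rw [← Finset.inter_union_distrib_left, ← Finset.union_assoc, hunion, Finset.inter_univ]
    have hd : Disjoint (I ∩ R) (I ∩ (S ∪ T)) :=
      (Finset.disjoint_union_right.mpr ⟨hRS, hRT⟩).mono Finset.inter_subset_right
        Finset.inter_subset_right
    have : m = (I ∩ R).card + (I ∩ (S ∪ T)).card := by
      rw [← Finset.card_union_of_disjoint hd, ← hsplit, hIcard]
    have hle : (I ∩ R).card ≤ x := hR ▸ Finset.card_le_card Finset.inter_subset_right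
    omega
end

section
/- There exists $n_0$ such that for every $n \geq n_0$ with $n \equiv 0 \pmod{15}$, there is a 3-uniform hypergraph $H$ on $n$ vertices with no isolated vertices satisfying: (1) $\deg(u)+\deg(v) > 2\left(\binom{n-1}{2} - \binom{2n/3}{2}\right)$ for all adjacent vertices $u,v$; (2) $H$ has no perfect matching; (3) $H$ is not (isomorphic to) a subgraph of $H^2_{n,n/3}$. -/
/-!
Write `n = 15m` and split the vertices into `R`, `S`, `T` of sizes `3m`, `4m+1`, `8m-1`; the edges
are the triples of types `RTT`, `STT`, `SST`, `TTT`.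

An edge meeting `R` meets it once and avoids `S`, so with weight `2` on `R` and `1` on `S` every
edge weighs at most `2`. A perfect matching has `5m` edges but the total weight is
`6m + 4m + 1 > 10m`.

Any two vertices outside `R` lie in a common edge, whereas an edge of `H²_{n,n/3}` meets its first
`5m+1` vertices at most once. Since only `3m` vertices lie in `R`, an embedding would send two
vertices outside `R` into that set.

The degrees are counted through links; the smallest degree sum over adjacent pairs, attained by
an `R`–`T` pair, is `128m² - 36m + 2`, above the threshold `125m² - 35m + 2`.
-/

open Finset

/-- The degree of a vertex in a 3-graph given by its edge set. -/
def hdeg {n : ℕ} (E : Finset (Finset (Fin n))) (v : Fin n) : ℕ :=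
  (E.filter (fun e => v ∈ e)).card

/-- The edge set of `H²_{n,s}`: partition into `S` (first `n-2s+1` vertices) and
`T` (last `2s-1` vertices); edges are triples with at least two vertices in `T`. -/
def H2edges (n s : ℕ) : Finset (Finset (Fin n)) :=
  (Finset.univ.powersetCard 3).filter
    (fun e => 2 ≤ (e.filter (fun v : Fin n => n - 2 * s + 1 ≤ v.val)).card)

section H12

variable {n : ℕ} {R T : Finset (Fin n)}

/-- `H^{1,2}` with parts `R`, `S := (R ∪ T)ᶜ` and `T`: the triples with two vertices in `T`, or
with one in `T` and none in `R`, are exactly those of types `RTT`, `STT`, `SST`, `TTT`. -/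
def H12edges (R T : Finset (Fin n)) : Finset (Finset (Fin n)) :=
  (univ.powersetCard 3).filter fun e => 2 ≤ #(e ∩ T) ∨ ((e ∩ T).Nonempty ∧ Disjoint R e)

lemma mem_H12edges {e : Finset (Fin n)} :
    e ∈ H12edges R T ↔
      #e = 3 ∧ (2 ≤ #(e ∩ T) ∨ ((e ∩ T).Nonempty ∧ Disjoint R e)) := by
  rw [H12edges, mem_filter, mem_powersetCard_univ]

lemma insert_mem_H12edges_of_two_le_card_inter {v : Fin n} {p : Finset (Fin n)} (hv : v ∉ p)
    (hp : #p = 2) (h : 2 ≤ #(insert v p ∩ T)) : insert v p ∈ H12edges R T :=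
  mem_H12edges.2 ⟨by rw [card_insert_of_notMem hv, hp], Or.inl h⟩

lemma insert_mem_H12edges_of_subset_compl {v t : Fin n} {p : Finset (Fin n)} (hv : v ∉ p)
    (hp : #p = 2) (ht : t ∈ insert v p) (htT : t ∈ T) (hR : insert v p ⊆ Rᶜ) :
    insert v p ∈ H12edges R T :=
  mem_H12edges.2 ⟨by rw [card_insert_of_notMem hv, hp],
    Or.inr ⟨⟨t, mem_inter.2 ⟨ht, htT⟩⟩, subset_compl_iff_disjoint_left.1 hR⟩⟩

lemma card_sdiff_add_card_inter_le_two (hRT : Disjoint R T) {e : Finset (Fin n)}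
    (he : e ∈ H12edges R T) : #(e \ T) + #(e ∩ R) ≤ 2 := by
  have hsplit := card_sdiff_add_card_inter e T
  obtain ⟨he3, h | ⟨hT, hRe⟩⟩ := mem_H12edges.1 he
  · have : e ∩ R ⊆ e \ T := fun x hx =>
      mem_sdiff.2 ⟨(mem_inter.1 hx).1, disjoint_left.1 hRT (mem_inter.1 hx).2⟩
    have := card_le_card this
    omega
  · rw [inter_comm, disjoint_iff_inter_eq_empty.1 hRe, card_empty]
    have := card_pos.2 hT
    omega

lemma mem_right_of_mem_H12edges (hRT : Disjoint R T) {e : Finset (Fin n)}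
    (he : e ∈ H12edges R T) {u v : Fin n} (hu : u ∈ e) (huR : u ∈ R) (hv : v ∈ e)
    (huv : u ≠ v) : v ∈ T := by
  by_contra hvT
  obtain ⟨he3, h | ⟨-, hRe⟩⟩ := mem_H12edges.1 he
  · have : 1 < #(e \ T) := one_lt_card.2
      ⟨u, mem_sdiff.2 ⟨hu, disjoint_left.1 hRT huR⟩, v, mem_sdiff.2 ⟨hv, hvT⟩, huv⟩
    have := card_sdiff_add_card_inter e T
    omega
  · exact disjoint_left.1 hRe huR hu

lemma exists_mem_H12edges_of_notMem_left (hRT : Disjoint R T) (hT : 3 ≤ #T) {a b : Fin n}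
    (ha : a ∉ R) (hb : b ∉ R) (hab : a ≠ b) :
    ∃ e ∈ H12edges R T, a ∈ e ∧ b ∈ e := by
  obtain ⟨t, ht⟩ : (T \ {a, b}).Nonempty := by
    rw [← card_pos]
    have := le_card_sdiff {a, b} T
    have := card_le_two (a := a) (b := b)
    omega
  obtain ⟨htT, htab⟩ := mem_sdiff.1 ht
  have hR : insert t {a, b} ⊆ Rᶜ := by
    simp [insert_subset_iff, ha, hb, disjoint_right.1 hRT htT]
  exact ⟨insert t {a, b},
    insert_mem_H12edges_of_subset_compl htab (card_pair hab) (mem_insert_self t _) htT hR,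
    by simp, by simp⟩

lemma sum_card_inter_of_partition {M : Finset (Finset (Fin n))}
    (hdisj : (M : Set (Finset (Fin n))).Pairwise Disjoint) (hcover : M.sup id = univ)
    (X : Finset (Fin n)) : ∑ e ∈ M, #(e ∩ X) = #X := by
  have hX : X = M.biUnion (· ∩ X) := by
    rw [← biUnion_inter, ← sup_eq_biUnion]
    exact (congrArg (· ∩ X) hcover).trans (univ_inter X) |>.symm
  conv_rhs => rw [hX]
  rw [card_biUnion]
  exact fun e he f hf hef => (hdisj he hf hef).mono inter_subset_left inter_subset_left

theorem not_exists_perfect_matching_H12edges (hRT : Disjoint R T)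
    (hsize : 2 * n < 3 * (#Tᶜ + #R)) :
    ¬ ∃ M : Finset (Finset (Fin n)), M ⊆ H12edges R T ∧
      (M : Set (Finset (Fin n))).Pairwise (fun e f => Disjoint e f) ∧ M.sup id = univ := by
  rintro ⟨M, hME, hdisj, hcover⟩
  have hsum := sum_card_inter_of_partition hdisj hcover
  have hcard : ∑ e ∈ M, #(e ∩ univ) = 3 * #M := by
    rw [sum_congr rfl fun e he => by rw [inter_univ, (mem_H12edges.1 (hME he)).1], sum_const,
      smul_eq_mul, mul_comm]
  have hweight : ∑ e ∈ M, (#(e ∩ Tᶜ) + #(e ∩ R)) ≤ ∑ _e ∈ M, 2 :=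
    sum_le_sum fun e he => by
      rw [← sdiff_eq_inter_compl]
      exact card_sdiff_add_card_inter_le_two hRT (hME he)
  rw [sum_add_distrib, hsum, hsum, sum_const, smul_eq_mul] at hweight
  rw [hsum, card_univ, Fintype.card_fin] at hcard
  omega

lemma card_le_hdeg_of_insert_mem {E P : Finset (Finset (Fin n))} {v : Fin n}
    (hP : ∀ p ∈ P, v ∉ p ∧ insert v p ∈ E) : #P ≤ hdeg E v := by
  refine card_le_card_of_injOn (insert v) (fun p hp => ?_) fun p hp q hq hpq => ?_
  · exact mem_filter.2 ⟨(hP p hp).2, mem_insert_self v p⟩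
  · rw [← erase_insert (hP p hp).1, ← erase_insert (hP q hq).1]
    exact congrArg (erase · v) hpq

lemma choose_card_le_hdeg_of_mem_left (hRT : Disjoint R T) {v : Fin n} (hv : v ∈ R) :
    (#T).choose 2 ≤ hdeg (H12edges R T) v := by
  rw [← card_powersetCard]
  refine card_le_hdeg_of_insert_mem fun p hp => ?_
  obtain ⟨hpT, hp2⟩ := mem_powersetCard.1 hp
  have hvp : v ∉ p := fun h => disjoint_left.1 hRT hv (hpT h)
  exact ⟨hvp, insert_mem_H12edges_of_two_le_card_inter hvp hp2
    (hp2 ▸ card_le_card (subset_inter (subset_insert v p) hpT))⟩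

lemma choose_le_hdeg_of_notMem_left_right (hRT : Disjoint R T) {v : Fin n} (hvR : v ∉ R)
    (hvT : v ∉ T) :
    (n - #R - 1).choose 2 ≤ hdeg (H12edges R T) v + (n - #R - #T - 1).choose 2 := by
  have hsub : ((R ∪ T)ᶜ.erase v).powersetCard 2 ⊆ (Rᶜ.erase v).powersetCard 2 :=
    powersetCard_mono (erase_subset_erase v (compl_subset_compl.2 subset_union_left))
  -- the link of `v` contains the pairs outside `R` that meet `T`
  have hcard := card_le_hdeg_of_insert_mem
    (P := (Rᶜ.erase v).powersetCard 2 \ ((R ∪ T)ᶜ.erase v).powersetCard 2) (v := v)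
    (E := H12edges R T) fun p hp => by
      obtain ⟨hp, hpS⟩ := mem_sdiff.1 hp
      obtain ⟨hpR, hp2⟩ := mem_powersetCard.1 hp
      obtain ⟨t, htp, ht⟩ := not_subset.1 fun h => hpS (mem_powersetCard.2 ⟨h, hp2⟩)
      obtain ⟨htv, htR⟩ := mem_erase.1 (hpR htp)
      have htT : t ∈ T := by simpa [htv, mem_compl.1 htR] using ht
      have hvp : v ∉ p := fun h => (mem_erase.1 (hpR h)).1 rfl
      exact ⟨hvp, insert_mem_H12edges_of_subset_compl hvp hp2 (mem_insert_of_mem htp) htT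
        (insert_subset (mem_compl.2 hvR) (hpR.trans (erase_subset v _)))⟩
  rw [card_sdiff_of_subset hsub, card_powersetCard, card_powersetCard,
    card_erase_of_mem (mem_compl.2 hvR), card_erase_of_mem (by simp [hvR, hvT]), card_compl,
    card_compl, card_union_of_disjoint hRT, Fintype.card_fin, Nat.sub_add_eq] at hcard
  omega

lemma choose_le_hdeg_of_mem_right (hRT : Disjoint R T) {v : Fin n} (hv : v ∈ T) :
    (n - 1).choose 2 + (n - #R - #T).choose 2 ≤ hdeg (H12edges R T) v + (n - #T).choose 2 := by
  have hsub : Tᶜ.powersetCard 2 ⊆ (univ.erase v).powersetCard 2 :=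
    powersetCard_mono fun x hx => mem_erase.2 ⟨fun h => mem_compl.1 hx (h ▸ hv), mem_univ x⟩
  have hdisj : Disjoint ((univ.erase v).powersetCard 2 \ Tᶜ.powersetCard 2)
      ((R ∪ T)ᶜ.powersetCard 2) :=
    disjoint_sdiff_self_left.mono_right
      (powersetCard_mono (compl_subset_compl.2 subset_union_right))
  -- the link of `v` contains the pairs meeting `T` and the pairs inside `S = (R ∪ T)ᶜ`
  have hcard := card_le_hdeg_of_insert_mem
    (P := ((univ.erase v).powersetCard 2 \ Tᶜ.powersetCard 2) ∪ (R ∪ T)ᶜ.powersetCard 2)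
    (v := v) (E := H12edges R T) fun p hp => by
      rcases mem_union.1 hp with hp | hp
      · obtain ⟨hp, hpT⟩ := mem_sdiff.1 hp
        obtain ⟨hpv, hp2⟩ := mem_powersetCard.1 hp
        obtain ⟨t, htp, ht⟩ := not_subset.1 fun h => hpT (mem_powersetCard.2 ⟨h, hp2⟩)
        have hvp : v ∉ p := fun h => (mem_erase.1 (hpv h)).1 rfl
        have htT : t ∈ T := by simpa using ht
        have hvt : {v, t} ⊆ insert v p ∩ T := insert_subset_iff.2
          ⟨mem_inter.2 ⟨mem_insert_self v p, hv⟩,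
            singleton_subset_iff.2 (mem_inter.2 ⟨mem_insert_of_mem htp, htT⟩)⟩
        have hne : v ≠ t := fun h => hvp (h ▸ htp)
        exact ⟨hvp, insert_mem_H12edges_of_two_le_card_inter hvp hp2
          (card_pair hne ▸ card_le_card hvt)⟩
      · obtain ⟨hpS, hp2⟩ := mem_powersetCard.1 hp
        have hvp : v ∉ p := fun h => by simpa [hv] using hpS h
        exact ⟨hvp, insert_mem_H12edges_of_subset_compl hvp hp2 (mem_insert_self v p) hv
          (insert_subset (mem_compl.2 (disjoint_right.1 hRT hv))
            (hpS.trans (compl_subset_compl.2 subset_union_left)))⟩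
  rw [card_union_of_disjoint hdisj, card_sdiff_of_subset hsub, card_powersetCard,
    card_powersetCard, card_powersetCard, card_erase_of_mem (mem_univ v), card_compl,
    card_compl, card_union_of_disjoint hRT, card_univ, Fintype.card_fin, Nat.sub_add_eq] at hcard
  have : (n - #T).choose 2 ≤ (n - 1).choose 2 :=
    Nat.choose_le_choose 2 (by have := card_pos.2 ⟨v, hv⟩; omega)
  omega

end H12

lemma card_filter_lt_le_one_of_mem_H2edges {n s : ℕ} {e : Finset (Fin n)}
    (he : e ∈ H2edges n s) : #{v ∈ e | v.val < n - 2 * s + 1} ≤ 1 := by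
  rw [H2edges, mem_filter, mem_powersetCard_univ] at he
  have := card_filter_add_card_filter_not (s := e) fun v : Fin n => n - 2 * s + 1 ≤ v.val
  simp only [not_le] at this
  omega

theorem not_exists_embedding_H2edges {n s : ℕ} {E : Finset (Finset (Fin n))}
    (W : Finset (Fin n)) (hW : ∀ a ∈ W, ∀ b ∈ W, a ≠ b → ∃ e ∈ E, a ∈ e ∧ b ∈ e)
    (hs : 0 < s) (hsize : #Wᶜ + 2 ≤ n - 2 * s + 1) :
    ¬ ∃ f : Fin n → Fin n, Function.Injective f ∧
      ∀ e ∈ E, e.image f ∈ H2edges n s := by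
  rintro ⟨f, hf, hE⟩
  set k := n - 2 * s + 1
  have hlow : #{v | (f v).val < k} = k := by
    rw [← card_image_of_injective _ hf, ← filter_image (p := fun w : Fin n => w.val < k),
      image_univ_of_surjective (Finite.injective_iff_surjective.1 hf), Fin.card_filter_val_lt]
    omega
  obtain ⟨a, ha, b, hb, hab⟩ := one_lt_card.1 <| show 1 < #{v ∈ W | (f v).val < k} by
    have : #{v | (f v).val < k} ≤ #{v ∈ W | (f v).val < k} + #Wᶜ :=
      (card_le_card fun v hv => by by_cases hvW : v ∈ W <;> simp_all).trans (card_union_le _ _)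
    omega
  rw [mem_filter] at ha hb
  obtain ⟨e, he, hae, hbe⟩ := hW a ha.1 b hb.1 hab
  have hpair : {f a, f b} ⊆ {w ∈ e.image f | w.val < k} := by
    simp [insert_subset_iff, mem_image_of_mem f hae, mem_image_of_mem f hbe, ha.2, hb.2]
  have := (card_le_card hpair).trans (card_filter_lt_le_one_of_mem_H2edges (hE e he))
  rw [card_pair (hf.ne hab)] at this
  omega

section Witness

variable {m : ℕ}

def witnessR (m : ℕ) : Finset (Fin (15 * m)) := {v : Fin (15 * m) | v.val < 3 * m}

def witnessT (m : ℕ) : Finset (Fin (15 * m)) :=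
  ({v : Fin (15 * m) | v.val < 7 * m + 1} : Finset (Fin (15 * m)))ᶜ

lemma card_witnessR : #(witnessR m) = 3 * m := by
  rw [witnessR, Fin.card_filter_val_lt]
  omega

lemma card_witnessT : #(witnessT m) = 8 * m - 1 := by
  rw [witnessT, card_compl, Fintype.card_fin, Fin.card_filter_val_lt]
  omega

lemma card_compl_witnessT (hm : 1 ≤ m) : #(witnessT m)ᶜ = 7 * m + 1 := by
  rw [witnessT, compl_compl, Fin.card_filter_val_lt]
  omega

lemma disjoint_witnessR_witnessT : Disjoint (witnessR m) (witnessT m) := by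
  simp only [witnessR, witnessT, disjoint_left, mem_compl, mem_filter, mem_univ, true_and]
  omega

lemma le_hdeg_witness_of_mem_R (hm : 1 ≤ m) {v : Fin (15 * m)} (hv : v ∈ witnessR m) :
    (32 * m ^ 2 - 12 * m + 1 : ℚ) ≤ hdeg (H12edges (witnessR m) (witnessT m)) v := by
  have h := choose_card_le_hdeg_of_mem_left disjoint_witnessR_witnessT hv
  rw [card_witnessT] at h
  have h' := (Nat.cast_le (α := ℚ)).2 h
  push_cast [Nat.cast_choose_two, Nat.cast_sub (show 1 ≤ 8 * m by omega)] at h'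
  linarith

lemma le_hdeg_witness_of_notMem_R_T (hm : 1 ≤ m) {v : Fin (15 * m)} (hvR : v ∉ witnessR m)
    (hvT : v ∉ witnessT m) :
    (64 * m ^ 2 - 16 * m + 1 : ℚ) ≤ hdeg (H12edges (witnessR m) (witnessT m)) v := by
  have h := choose_le_hdeg_of_notMem_left_right disjoint_witnessR_witnessT hvR hvT
  rw [card_witnessR, card_witnessT, show 15 * m - 3 * m - 1 = 12 * m - 1 by omega,
    show 15 * m - 3 * m - (8 * m - 1) - 1 = 4 * m by omega] at h
  have h' := (Nat.cast_le (α := ℚ)).2 h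
  push_cast [Nat.cast_choose_two, Nat.cast_sub (show 1 ≤ 12 * m by omega)] at h'
  linarith

lemma le_hdeg_witness_of_mem_T (hm : 1 ≤ m) {v : Fin (15 * m)} (hv : v ∈ witnessT m) :
    (96 * m ^ 2 - 24 * m + 1 : ℚ) ≤ hdeg (H12edges (witnessR m) (witnessT m)) v := by
  have h := choose_le_hdeg_of_mem_right disjoint_witnessR_witnessT hv
  rw [card_witnessR, card_witnessT, show 15 * m - 3 * m - (8 * m - 1) = 4 * m + 1 by omega,
    show 15 * m - (8 * m - 1) = 7 * m + 1 by omega] at h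
  have h' := (Nat.cast_le (α := ℚ)).2 h
  push_cast [Nat.cast_choose_two, Nat.cast_sub (show 1 ≤ 15 * m by omega)] at h'
  linarith

lemma le_hdeg_witness_of_notMem_R (hm : 1 ≤ m) {v : Fin (15 * m)} (hvR : v ∉ witnessR m) :
    (64 * m ^ 2 - 16 * m + 1 : ℚ) ≤ hdeg (H12edges (witnessR m) (witnessT m)) v := by
  by_cases hvT : v ∈ witnessT m
  · have := le_hdeg_witness_of_mem_T hm hvT
    have hm' : (1 : ℚ) ≤ m := by exact_mod_cast hm
    nlinarith
  · exact le_hdeg_witness_of_notMem_R_T hm hvR hvT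

lemma hdeg_witness_pos (hm : 1 ≤ m) (v : Fin (15 * m)) :
    0 < hdeg (H12edges (witnessR m) (witnessT m)) v := by
  have hm' : (1 : ℚ) ≤ m := by exact_mod_cast hm
  suffices (0 : ℚ) < hdeg (H12edges (witnessR m) (witnessT m)) v by exact_mod_cast this
  by_cases hvR : v ∈ witnessR m
  · have := le_hdeg_witness_of_mem_R hm hvR
    nlinarith
  · have := le_hdeg_witness_of_notMem_R hm hvR
    nlinarith

lemma le_hdeg_add_hdeg_witness (hm : 1 ≤ m) {u v : Fin (15 * m)} (huv : u ≠ v)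
    (hadj : ∃ e ∈ H12edges (witnessR m) (witnessT m), u ∈ e ∧ v ∈ e) :
    (128 * m ^ 2 - 36 * m + 2 : ℚ) ≤
      hdeg (H12edges (witnessR m) (witnessT m)) u +
        hdeg (H12edges (witnessR m) (witnessT m)) v := by
  obtain ⟨e, he, hu, hv⟩ := hadj
  have hm' : (1 : ℚ) ≤ m := by exact_mod_cast hm
  by_cases huR : u ∈ witnessR m
  · have := le_hdeg_witness_of_mem_R hm huR
    have := le_hdeg_witness_of_mem_T hm
      (mem_right_of_mem_H12edges disjoint_witnessR_witnessT he hu huR hv huv)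
    linarith
  by_cases hvR : v ∈ witnessR m
  · have := le_hdeg_witness_of_mem_R hm hvR
    have := le_hdeg_witness_of_mem_T hm
      (mem_right_of_mem_H12edges disjoint_witnessR_witnessT he hv hvR hu huv.symm)
    linarith
  have := le_hdeg_witness_of_notMem_R hm huR
  have := le_hdeg_witness_of_notMem_R hm hvR
  linarith

lemma cast_two_mul_choose_sub_choose (hm : 1 ≤ m) :
    ((2 * ((15 * m - 1).choose 2 - (2 * (15 * m) / 3).choose 2) : ℕ) : ℚ) =
      125 * m ^ 2 - 35 * m + 2 := by
  rw [show 2 * (15 * m) / 3 = 10 * m by omega]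
  have hle : (10 * m).choose 2 ≤ (15 * m - 1).choose 2 := Nat.choose_le_choose 2 (by omega)
  push_cast [Nat.cast_sub hle, Nat.cast_choose_two, Nat.cast_sub (show 1 ≤ 15 * m by omega)]
  ring

end Witness

/-- counterexample to the Zhang–Lu conjecture. -/
theorem stmt3 : ∃ n₀ : ℕ, ∀ n ≥ n₀, 15 ∣ n →
    ∃ E : Finset (Finset (Fin n)),
      (∀ e ∈ E, e.card = 3) ∧
      (∀ v : Fin n, 0 < hdeg E v) ∧
      (∀ u v : Fin n, u ≠ v → (∃ e ∈ E, u ∈ e ∧ v ∈ e) →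
        hdeg E u + hdeg E v > 2 * (Nat.choose (n - 1) 2 - Nat.choose (2 * n / 3) 2)) ∧
      (¬ ∃ M : Finset (Finset (Fin n)), M ⊆ E ∧
        (M : Set (Finset (Fin n))).Pairwise (fun e f => Disjoint e f) ∧
        M.sup id = Finset.univ) ∧
      (¬ ∃ f : Fin n → Fin n, Function.Injective f ∧
        ∀ e ∈ E, e.image f ∈ H2edges n (n / 3)) := by
  refine ⟨15, fun n hn ⟨m, hnm⟩ => ?_⟩
  subst hnm
  have hm : 1 ≤ m := by omega
  have hRT := disjoint_witnessR_witnessT (m := m)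
  refine ⟨H12edges (witnessR m) (witnessT m), fun e he => (mem_H12edges.1 he).1,
    hdeg_witness_pos hm, fun u v huv hadj => ?_,
    not_exists_perfect_matching_H12edges hRT ?_,
    not_exists_embedding_H2edges (witnessR m)ᶜ (fun a ha b hb hab => ?_) (by omega) ?_⟩
  · have hsum := le_hdeg_add_hdeg_witness hm huv hadj
    have hm' : (1 : ℚ) ≤ m := by exact_mod_cast hm
    rw [gt_iff_lt, ← Nat.cast_lt (α := ℚ), cast_two_mul_choose_sub_choose hm, Nat.cast_add]
    nlinarith
  · rw [card_compl_witnessT hm, card_witnessR]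
    omega
  · exact exists_mem_H12edges_of_notMem_left hRT (by rw [card_witnessT]; omega)
      (mem_compl.1 ha) (mem_compl.1 hb) hab
  · rw [compl_compl, card_witnessR]
    omega
end

section
/- Let $G_1, G_2, G_3$ be graphs on the same vertex set $V$ with $|V| = n \geq 4$, such that every edge of $G_1$ intersects every edge of $G_2$ and every edge of $G_1$ intersects every edge of $G_3$. Then for any set $A \subseteq V$ with $|A| = 3$, $\sum_{i=1}^{3} \sum_{v \in A} \deg_{G_i}(v) \leq 6(n-1)$. -/
open Finset

section helpers
variable {V : Type*} [Fintype V] [DecidableEq V]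

lemma pairInter {a b c d : V} (h : (({a,b} : Finset V) ∩ {c,d}).Nonempty) :
    a = c ∨ a = d ∨ b = c ∨ b = d := by
  obtain ⟨x, hx⟩ := h
  simp only [mem_inter, mem_insert, mem_singleton] at hx
  rcases hx with ⟨h1 | h1, h2 | h2⟩ <;> subst h1 <;> tauto

lemma orFlip {a b x y : V} (h : a = x ∨ a = y ∨ b = x ∨ b = y) :
    x = a ∨ x = b ∨ y = a ∨ y = b := by
  rcases h with h|h|h|h
  exacts [Or.inl h.symm, Or.inr (Or.inr (Or.inl h.symm)), Or.inr (Or.inl h.symm),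
    Or.inr (Or.inr (Or.inr h.symm))]

lemma degLe (H : SimpleGraph V) [DecidableRel H.Adj] {v : V} (s : Finset V)
    (h : ∀ x, H.Adj v x → x ∈ s) : H.degree v ≤ s.card := by
  have hsub : H.neighborFinset v ⊆ s := fun x hx =>
    h x ((SimpleGraph.mem_neighborFinset _ _ _).1 hx)
  rw [← SimpleGraph.card_neighborFinset_eq_degree]
  exact card_le_card hsub

lemma degAll (H : SimpleGraph V) [DecidableRel H.Adj] {n : ℕ}
    (hcard : Fintype.card V = n) (v : V) : H.degree v ≤ n - 1 := by
  have := degLe H (univ.erase v) (fun x hx => mem_erase.2 ⟨(H.ne_of_adj hx).symm, mem_univ x⟩)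
  rwa [card_erase_of_mem (mem_univ v), card_univ, hcard] at this

lemma pair_card_le (a b : V) : ({a, b} : Finset V).card ≤ 2 :=
  (card_insert_le _ _).trans (by simp)

lemma triple_card_le (a b c : V) : ({a, b, c} : Finset V).card ≤ 3 := by
  refine (card_insert_le _ _).trans ?_
  have := pair_card_le b c
  omega

lemma sum3 {A : Finset V} (hA : A.card = 3) (f : V → ℕ) (c : ℕ)
    (h : ∀ v ∈ A, f v ≤ c) : ∑ v ∈ A, f v ≤ 3 * c := by
  have := Finset.sum_le_card_nsmul A f c h
  simpa [hA, mul_comm] using this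

lemma sumU {A : Finset V} (hA : A.card = 3) (f : V → ℕ) (u : V) (D c : ℕ)
    (hc : c ≤ D) (hu : f u ≤ D) (ho : ∀ v, v ≠ u → f v ≤ c) :
    ∑ v ∈ A, f v ≤ D + 2 * c := by
  by_cases hm : u ∈ A
  · have h1 : ∑ v ∈ A.erase u, f v ≤ 2 * c := by
      have hle := Finset.sum_le_card_nsmul (A.erase u) f c
        (fun v hv => ho v (Finset.ne_of_mem_erase hv))
      have hce : (A.erase u).card = 2 := by rw [Finset.card_erase_of_mem hm, hA]
      rw [hce] at hle
      simpa [two_mul, mul_comm] using hle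
    have h2 : ∑ v ∈ A.erase u, f v + f u = ∑ v ∈ A, f v := Finset.sum_erase_add A f hm
    omega
  · have := sum3 hA f c (fun v hv => ho v (by rintro rfl; exact hm hv))
    omega

lemma sumS {A : Finset V} (hA : A.card = 3) (f : V → ℕ) (p q : V) (D c : ℕ)
    (hc : c ≤ D) (hD : ∀ v, f v ≤ D) (ho : ∀ v, v ≠ p → v ≠ q → f v ≤ c) :
    ∑ v ∈ A, f v ≤ 2 * D + c := by
  classical
  have hsplit := Finset.sum_filter_add_sum_filter_not A (fun v => v = p ∨ v = q) f
  set k := (A.filter (fun v => v = p ∨ v = q)).card with hk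
  have hk2 : k ≤ 2 := by
    have hsub : A.filter (fun v => v = p ∨ v = q) ⊆ {p, q} := by
      intro v hv
      simp only [mem_filter] at hv
      simp only [mem_insert, mem_singleton]
      exact hv.2
    exact (card_le_card hsub).trans (pair_card_le p q)
  have hktot : k + (A.filter (fun v => ¬(v = p ∨ v = q))).card = 3 := by
    rw [hk]
    rw [Finset.card_filter_add_card_filter_not]
    exact hA
  have h1 : ∑ v ∈ A.filter (fun v => v = p ∨ v = q), f v ≤ k * D := by
    have := Finset.sum_le_card_nsmul (A.filter (fun v => v = p ∨ v = q)) f D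
      (fun v _ => hD v)
    simpa [hk, mul_comm] using this
  have h2 : ∑ v ∈ A.filter (fun v => ¬(v = p ∨ v = q)), f v ≤ (3 - k) * c := by
    have := Finset.sum_le_card_nsmul (A.filter (fun v => ¬(v = p ∨ v = q))) f c
      (fun v hv => by
        have hv' := (mem_filter.1 hv).2
        push_neg at hv'
        exact ho v hv'.1 hv'.2)
    have hcc : (A.filter (fun v => ¬(v = p ∨ v = q))).card = 3 - k := by omega
    rw [hcc] at this
    simpa [mul_comm] using this
  have hk012 : k = 0 ∨ k = 1 ∨ k = 2 := by omega
  rcases hk012 with h|h|h <;> rw [h] at h1 h2 <;> omega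

lemma sumE (H : SimpleGraph V) [DecidableRel H.Adj] {A : Finset V} (hA : A.card = 3)
    (s : Finset V) (m : ℕ) (hm : s.card ≤ m)
    (hE : ∀ x y, H.Adj x y → x ∈ s ∧ y ∈ s) :
    ∑ v ∈ A, H.degree v ≤ m * (m - 1) := by
  classical
  have hdeg0 : ∀ v, v ∉ s → H.degree v = 0 := by
    intro v hv
    have := degLe H (∅ : Finset V) (fun x hx => absurd (hE v x hx).1 hv)
    simpa using this
  have hdeg : ∀ v, H.degree v ≤ m - 1 := by
    intro v
    by_cases hv : v ∈ s
    · have h1 := degLe H (s.erase v)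
        (fun x hx => Finset.mem_erase.2 ⟨(H.ne_of_adj hx).symm, (hE v x hx).2⟩)
      have h2 : (s.erase v).card = s.card - 1 := card_erase_of_mem hv
      have hs1 : 1 ≤ s.card := card_pos.2 ⟨v, hv⟩
      omega
    · rw [hdeg0 v hv]; omega
  have hsplit := Finset.sum_filter_add_sum_filter_not A (fun v => v ∈ s) (fun v => H.degree v)
  have h1 : ∑ v ∈ A.filter (fun v => v ∈ s), H.degree v ≤ s.card * (m - 1) := by
    have hb := Finset.sum_le_card_nsmul (A.filter (fun v => v ∈ s)) (fun v => H.degree v) (m - 1)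
      (fun v _ => hdeg v)
    have hsub : A.filter (fun v => v ∈ s) ⊆ s := fun v hv => (mem_filter.1 hv).2
    have hcle := card_le_card hsub
    calc ∑ v ∈ A.filter (fun v => v ∈ s), H.degree v
        ≤ (A.filter (fun v => v ∈ s)).card * (m - 1) := by simpa [mul_comm] using hb
      _ ≤ s.card * (m - 1) := Nat.mul_le_mul_right _ hcle
  have h2 : ∑ v ∈ A.filter (fun v => ¬ v ∈ s), H.degree v = 0 :=
    Finset.sum_eq_zero fun v hv => hdeg0 v (mem_filter.1 hv).2
  have h3 : s.card * (m - 1) ≤ m * (m - 1) := Nat.mul_le_mul_right _ hm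
  omega

lemma degPair (H : SimpleGraph V) [DecidableRel H.Adj] {p q v : V}
    (hm : ∀ x y, H.Adj x y → x = p ∨ x = q ∨ y = p ∨ y = q)
    (hp : v ≠ p) (hq : v ≠ q) : H.degree v ≤ 2 := by
  refine (degLe H ({p, q} : Finset V) ?_).trans (pair_card_le p q)
  intro x hx
  simp only [mem_insert, mem_singleton]
  rcases hm v x hx with h|h|h|h <;> tauto

lemma degOne (H : SimpleGraph V) [DecidableRel H.Adj] {p v : V}
    (hm : ∀ x y, H.Adj x y → x = p ∨ y = p) (hv : v ≠ p) : H.degree v ≤ 1 := by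
  refine (degLe H ({p} : Finset V) ?_).trans (by simp)
  intro x hx
  simp only [mem_singleton]
  rcases hm v x hx with h|h <;> tauto

lemma degTwoPairs (H : SimpleGraph V) [DecidableRel H.Adj] {a b c d : V}
    (hac : a ≠ c) (had : a ≠ d) (hbc : b ≠ c) (hbd : b ≠ d)
    (h1 : ∀ x y, H.Adj x y → x = a ∨ x = b ∨ y = a ∨ y = b)
    (h2 : ∀ x y, H.Adj x y → x = c ∨ x = d ∨ y = c ∨ y = d)
    (v : V) : H.degree v ≤ 2 := by
  by_cases hv : v = c ∨ v = d
  · have hva : v ≠ a := by rcases hv with rfl|rfl; exacts [fun h => hac h.symm, fun h => had h.symm]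
    have hvb : v ≠ b := by rcases hv with rfl|rfl; exacts [fun h => hbc h.symm, fun h => hbd h.symm]
    exact degPair H h1 hva hvb
  · push_neg at hv
    exact degPair H h2 hv.1 hv.2

lemma triSub {a b r x y : V} (hab : a ≠ b) (har : a ≠ r) (hbr : b ≠ r)
    (m1 : x = a ∨ x = b ∨ y = a ∨ y = b)
    (m2 : x = b ∨ x = r ∨ y = b ∨ y = r)
    (m3 : x = a ∨ x = r ∨ y = a ∨ y = r) :
    x ∈ ({a, b, r} : Finset V) ∧ y ∈ ({a, b, r} : Finset V) := by
  simp only [mem_insert, mem_singleton]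
  rcases m1 with h|h|h|h <;> rcases m2 with h'|h'|h'|h' <;> rcases m3 with h''|h''|h''|h'' <;>
    subst_vars <;> simp_all <;> tauto

end helpers

section main
variable {V : Type*} [Fintype V] [DecidableEq V]

set_option maxHeartbeats 1000000 in
lemma starCase (n : ℕ) (hn : 4 ≤ n) (hcard : Fintype.card V = n)
    (G₁ G₂ G₃ : SimpleGraph V)
    [DecidableRel G₁.Adj] [DecidableRel G₂.Adj] [DecidableRel G₃.Adj]
    (h12 : ∀ a b c d : V, G₁.Adj a b → G₂.Adj c d →
      (({a, b} : Finset V) ∩ {c, d}).Nonempty)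
    (h13 : ∀ a b c d : V, G₁.Adj a b → G₃.Adj c d →
      (({a, b} : Finset V) ∩ {c, d}).Nonempty)
    (A : Finset V) (hA : A.card = 3)
    (u w : V) (huw : G₁.Adj u w)
    (hstar : ∀ x y, G₁.Adj x y → x = u ∨ y = u) :
    (∑ v ∈ A, G₁.degree v) + (∑ v ∈ A, G₂.degree v) + (∑ v ∈ A, G₃.degree v)
      ≤ 6 * (n - 1) := by
  classical
  have hd1 : ∀ v, G₁.degree v ≤ n - 1 := fun v => degAll G₁ hcard v
  have hd2 : ∀ v, G₂.degree v ≤ n - 1 := fun v => degAll G₂ hcard v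
  have hd3 : ∀ v, G₃.degree v ≤ n - 1 := fun v => degAll G₃ hcard v
  by_cases h3 : ∃ x y z, G₁.Adj u x ∧ G₁.Adj u y ∧ G₁.Adj u z ∧ x ≠ y ∧ x ≠ z ∧ y ≠ z
  · obtain ⟨x, y, z, hx, hy, hz, nxy, nxz, nyz⟩ := h3
    have hall2 : ∀ c d, G₂.Adj c d → c = u ∨ d = u := by
      intro c d h
      have m1 := pairInter (h12 u x c d hx h)
      have m2 := pairInter (h12 u y c d hy h)
      have m3 := pairInter (h12 u z c d hz h)
      by_contra hc
      push_neg at hc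
      obtain ⟨hcu, hdu⟩ := hc
      rcases m1 with h'|h'|h'|h' <;> rcases m2 with h''|h''|h''|h'' <;>
        rcases m3 with h'''|h'''|h'''|h''' <;> subst_vars <;> simp_all
    have hall3 : ∀ c d, G₃.Adj c d → c = u ∨ d = u := by
      intro c d h
      have m1 := pairInter (h13 u x c d hx h)
      have m2 := pairInter (h13 u y c d hy h)
      have m3 := pairInter (h13 u z c d hz h)
      by_contra hc
      push_neg at hc
      obtain ⟨hcu, hdu⟩ := hc
      rcases m1 with h'|h'|h'|h' <;> rcases m2 with h''|h''|h''|h'' <;>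
        rcases m3 with h'''|h'''|h'''|h''' <;> subst_vars <;> simp_all
    have hs1 : ∑ v ∈ A, G₁.degree v ≤ (n - 1) + 2 * 1 :=
      sumU hA _ u (n - 1) 1 (by omega) (hd1 u) (fun v hv => degOne G₁ hstar hv)
    have hs2 : ∑ v ∈ A, G₂.degree v ≤ (n - 1) + 2 * 1 :=
      sumU hA _ u (n - 1) 1 (by omega) (hd2 u) (fun v hv => degOne G₂ hall2 hv)
    have hs3 : ∑ v ∈ A, G₃.degree v ≤ (n - 1) + 2 * 1 :=
      sumU hA _ u (n - 1) 1 (by omega) (hd3 u) (fun v hv => degOne G₃ hall3 hv)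
    omega
  · by_cases h2 : ∃ x, G₁.Adj u x ∧ x ≠ w
    · obtain ⟨x, hux, hxw⟩ := h2
      have hN : ∀ z, G₁.Adj u z → z = w ∨ z = x := by
        intro z hz
        by_contra hc
        push_neg at hc
        exact h3 ⟨w, x, z, huw, hux, hz, fun h => hxw h.symm, fun h => hc.1 h.symm,
          fun h => hc.2 h.symm⟩
      have m2w : ∀ c d, G₂.Adj c d → u = c ∨ u = d ∨ w = c ∨ w = d :=
        fun c d h => pairInter (h12 u w c d huw h)
      have m2x : ∀ c d, G₂.Adj c d → u = c ∨ u = d ∨ x = c ∨ x = d :=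
        fun c d h => pairInter (h12 u x c d hux h)
      have m3w : ∀ c d, G₃.Adj c d → u = c ∨ u = d ∨ w = c ∨ w = d :=
        fun c d h => pairInter (h13 u w c d huw h)
      have m3x : ∀ c d, G₃.Adj c d → u = c ∨ u = d ∨ x = c ∨ x = d :=
        fun c d h => pairInter (h13 u x c d hux h)
      have d2 : ∀ (H : SimpleGraph V) (_ : DecidableRel H.Adj),
          (∀ c d, H.Adj c d → u = c ∨ u = d ∨ w = c ∨ w = d) →
          (∀ c d, H.Adj c d → u = c ∨ u = d ∨ x = c ∨ x = d) →
          ∀ v, v ≠ u → H.degree v ≤ 2 := by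
        intro H inst mw mx v hv
        by_cases hvw : v = w
        · subst hvw
          refine (degLe H ({u, x} : Finset V) ?_).trans (pair_card_le u x)
          intro t ht
          simp only [mem_insert, mem_singleton]
          rcases mx v t ht with h|h|h|h
          · exact absurd h.symm hv
          · exact Or.inl h.symm
          · exact absurd h hxw
          · exact Or.inr h.symm
        · refine (degLe H ({u, w} : Finset V) ?_).trans (pair_card_le u w)
          intro t ht
          simp only [mem_insert, mem_singleton]
          rcases mw v t ht with h|h|h|h
          · exact absurd h.symm hv
          · exact Or.inl h.symm
          · exact absurd h.symm hvw
          · exact Or.inr h.symm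
      have hs1 : ∑ v ∈ A, G₁.degree v ≤ 2 + 2 * 1 := by
        refine sumU hA _ u 2 1 (by omega) ?_ (fun v hv => degOne G₁ hstar hv)
        refine (degLe G₁ ({w, x} : Finset V) ?_).trans (pair_card_le w x)
        intro t ht
        simp only [mem_insert, mem_singleton]
        exact hN t ht
      have hs2 : ∑ v ∈ A, G₂.degree v ≤ (n - 1) + 2 * 2 :=
        sumU hA _ u (n - 1) 2 (by omega) (hd2 u) (fun v hv => d2 G₂ _ m2w m2x v hv)
      have hs3 : ∑ v ∈ A, G₃.degree v ≤ (n - 1) + 2 * 2 :=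
        sumU hA _ u (n - 1) 2 (by omega) (hd3 u) (fun v hv => d2 G₃ _ m3w m3x v hv)
      omega
    · push_neg at h2
      have hsub1 : ∀ x y, G₁.Adj x y → x ∈ ({u, w} : Finset V) ∧ y ∈ ({u, w} : Finset V) := by
        intro x y h
        rcases hstar x y h with rfl|rfl
        · have := h2 y h
          subst this
          simp
        · have := h2 x h.symm
          subst this
          simp
      have hs1 : ∑ v ∈ A, G₁.degree v ≤ 2 * (2 - 1) :=
        sumE G₁ hA ({u, w} : Finset V) 2 (pair_card_le u w) hsub1
      have hs2 : ∑ v ∈ A, G₂.degree v ≤ 2 * (n - 1) + 2 := by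
        refine sumS hA _ u w (n - 1) 2 (by omega) hd2 (fun v hvu hvw => ?_)
        refine degPair G₂ (fun x y h => orFlip (pairInter (h12 u w x y huw h))) hvu hvw
      have hs3 : ∑ v ∈ A, G₃.degree v ≤ 2 * (n - 1) + 2 := by
        refine sumS hA _ u w (n - 1) 2 (by omega) hd3 (fun v hvu hvw => ?_)
        refine degPair G₃ (fun x y h => orFlip (pairInter (h13 u w x y huw h))) hvu hvw
      omega

end main

set_option maxHeartbeats 1000000 in
/-- Lemma 6 of Zhang–Zhao–Lu. -/
theorem stmt5 {V : Type*} [Fintype V] [DecidableEq V] (n : ℕ) (hn : 4 ≤ n)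
    (hcard : Fintype.card V = n)
    (G₁ G₂ G₃ : SimpleGraph V)
    [DecidableRel G₁.Adj] [DecidableRel G₂.Adj] [DecidableRel G₃.Adj]
    (h12 : ∀ a b c d : V, G₁.Adj a b → G₂.Adj c d →
      (({a, b} : Finset V) ∩ {c, d}).Nonempty)
    (h13 : ∀ a b c d : V, G₁.Adj a b → G₃.Adj c d →
      (({a, b} : Finset V) ∩ {c, d}).Nonempty)
    (A : Finset V) (hA : A.card = 3) :
    ∑ v ∈ A, (G₁.degree v + G₂.degree v + G₃.degree v) ≤ 6 * (n - 1) := by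
  classical
  have hsplit : ∑ v ∈ A, (G₁.degree v + G₂.degree v + G₃.degree v)
      = (∑ v ∈ A, G₁.degree v) + (∑ v ∈ A, G₂.degree v) + (∑ v ∈ A, G₃.degree v) := by
    rw [← Finset.sum_add_distrib, ← Finset.sum_add_distrib]
  rw [hsplit]
  have hd1 : ∀ v, G₁.degree v ≤ n - 1 := fun v => degAll G₁ hcard v
  have hd2 : ∀ v, G₂.degree v ≤ n - 1 := fun v => degAll G₂ hcard v
  have hd3 : ∀ v, G₃.degree v ≤ n - 1 := fun v => degAll G₃ hcard v
  have hs1n : ∑ v ∈ A, G₁.degree v ≤ 3 * (n - 1) := sum3 hA _ _ (fun v _ => hd1 v)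
  have hs2n : ∑ v ∈ A, G₂.degree v ≤ 3 * (n - 1) := sum3 hA _ _ (fun v _ => hd2 v)
  have hs3n : ∑ v ∈ A, G₃.degree v ≤ 3 * (n - 1) := sum3 hA _ _ (fun v _ => hd3 v)
  by_cases hG1 : ∃ x y, G₁.Adj x y
  · obtain ⟨a, b, hab⟩ := hG1
    -- mG1 : every G₂/G₃ edge constrains every G₁ edge
    have mG1 : ∀ c d, (G₂.Adj c d ∨ G₃.Adj c d) → ∀ x y, G₁.Adj x y →
        x = c ∨ x = d ∨ y = c ∨ y = d := by
      rintro c d (h|h) x y hxy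
      exacts [pairInter (h12 x y c d hxy h), pairInter (h13 x y c d hxy h)]
    by_cases hdd : ∃ x y z t, G₁.Adj x y ∧ G₁.Adj z t ∧ x ≠ z ∧ x ≠ t ∧ y ≠ z ∧ y ≠ t
    · -- case (ii) : two disjoint edges in G₁
      obtain ⟨x1, y1, x2, y2, hA1, hA2, ne1, ne2, ne3, ne4⟩ := hdd
      have m2a : ∀ x y, G₂.Adj x y → x = x1 ∨ x = y1 ∨ y = x1 ∨ y = y1 :=
        fun x y h => orFlip (pairInter (h12 x1 y1 x y hA1 h))
      have m2b : ∀ x y, G₂.Adj x y → x = x2 ∨ x = y2 ∨ y = x2 ∨ y = y2 :=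
        fun x y h => orFlip (pairInter (h12 x2 y2 x y hA2 h))
      have m3a : ∀ x y, G₃.Adj x y → x = x1 ∨ x = y1 ∨ y = x1 ∨ y = y1 :=
        fun x y h => orFlip (pairInter (h13 x1 y1 x y hA1 h))
      have m3b : ∀ x y, G₃.Adj x y → x = x2 ∨ x = y2 ∨ y = x2 ∨ y = y2 :=
        fun x y h => orFlip (pairInter (h13 x2 y2 x y hA2 h))
      have hs2 : ∑ v ∈ A, G₂.degree v ≤ 3 * 2 :=
        sum3 hA _ 2 (fun v _ => degTwoPairs G₂ ne1 ne2 ne3 ne4 m2a m2b v)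
      have hs3 : ∑ v ∈ A, G₃.degree v ≤ 3 * 2 :=
        sum3 hA _ 2 (fun v _ => degTwoPairs G₃ ne1 ne2 ne3 ne4 m3a m3b v)
      by_cases hF : ∃ p q, G₂.Adj p q ∨ G₃.Adj p q
      · obtain ⟨p, q, hpq⟩ := hF
        have hpqne : p ≠ q := by rcases hpq with h|h; exacts [h.ne, h.ne]
        by_cases hdisj : ∃ c d c' d', (G₂.Adj c d ∨ G₃.Adj c d) ∧ (G₂.Adj c' d' ∨ G₃.Adj c' d')
            ∧ c ≠ c' ∧ c ≠ d' ∧ d ≠ c' ∧ d ≠ d'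
        · obtain ⟨c, d, c', d', hcd, hcd', me1, me2, me3, me4⟩ := hdisj
          have hs1 : ∑ v ∈ A, G₁.degree v ≤ 3 * 2 :=
            sum3 hA _ 2 (fun v _ => degTwoPairs G₁ me1 me2 me3 me4
              (fun x y h => mG1 c d hcd x y h) (fun x y h => mG1 c' d' hcd' x y h) v)
          omega
        · -- all F-edges pairwise intersect
          have hFmeet : ∀ c d c' d', (G₂.Adj c d ∨ G₃.Adj c d) → (G₂.Adj c' d' ∨ G₃.Adj c' d')
              → c = c' ∨ c = d' ∨ d = c' ∨ d = d' := by
            intro c d c' d' h h'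
            by_contra hc
            push_neg at hc
            exact hdisj ⟨c, d, c', d', h, h', hc.1, hc.2.1, hc.2.2.1, hc.2.2.2⟩
          by_cases hp : ∀ c d, (G₂.Adj c d ∨ G₃.Adj c d) → c = p ∨ d = p
          · have hs1 : ∑ v ∈ A, G₁.degree v ≤ 2 * (n - 1) + 2 :=
              sumS hA _ p q (n - 1) 2 (by omega) hd1
                (fun v hvp hvq => degPair G₁ (fun x y h => mG1 p q hpq x y h) hvp hvq)
            have hs2' : ∑ v ∈ A, G₂.degree v ≤ (n - 1) + 2 * 1 :=
              sumU hA _ p (n - 1) 1 (by omega) (hd2 p)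
                (fun v hv => degOne G₂ (fun x y h => hp x y (Or.inl h)) hv)
            have hs3' : ∑ v ∈ A, G₃.degree v ≤ (n - 1) + 2 * 1 :=
              sumU hA _ p (n - 1) 1 (by omega) (hd3 p)
                (fun v hv => degOne G₃ (fun x y h => hp x y (Or.inr h)) hv)
            omega
          · by_cases hq : ∀ c d, (G₂.Adj c d ∨ G₃.Adj c d) → c = q ∨ d = q
            · have hs1 : ∑ v ∈ A, G₁.degree v ≤ 2 * (n - 1) + 2 :=
                sumS hA _ p q (n - 1) 2 (by omega) hd1
                  (fun v hvp hvq => degPair G₁ (fun x y h => mG1 p q hpq x y h) hvp hvq)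
              have hs2' : ∑ v ∈ A, G₂.degree v ≤ (n - 1) + 2 * 1 :=
                sumU hA _ q (n - 1) 1 (by omega) (hd2 q)
                  (fun v hv => degOne G₂ (fun x y h => hq x y (Or.inl h)) hv)
              have hs3' : ∑ v ∈ A, G₃.degree v ≤ (n - 1) + 2 * 1 :=
                sumU hA _ q (n - 1) 1 (by omega) (hd3 q)
                  (fun v hv => degOne G₃ (fun x y h => hq x y (Or.inr h)) hv)
              omega
            · -- triangle inside F
              push_neg at hp hq
              obtain ⟨c2, d2, hF2, hc2p, hd2p⟩ := hp
              obtain ⟨c3, d3, hF3, hc3q, hd3q⟩ := hq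
              -- F edge (q, r) with r ≠ p
              have hF2' : ∃ r, (G₂.Adj q r ∨ G₃.Adj q r) ∧ r ≠ p := by
                rcases hFmeet c2 d2 p q hF2 hpq with h|h|h|h
                · exact absurd h hc2p
                · subst h
                  exact ⟨d2, by rcases hF2 with h|h; exacts [Or.inl h, Or.inr h], hd2p⟩
                · exact absurd h hd2p
                · subst h
                  exact ⟨c2, by rcases hF2 with h|h; exacts [Or.inl h.symm, Or.inr h.symm], hc2p⟩
              obtain ⟨r, hFqr, hrp⟩ := hF2'
              -- F edge (p, s) with s ≠ q
              have hF3' : ∃ s, (G₂.Adj p s ∨ G₃.Adj p s) ∧ s ≠ q := by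
                rcases hFmeet c3 d3 p q hF3 hpq with h|h|h|h
                · subst h
                  exact ⟨d3, by rcases hF3 with h|h; exacts [Or.inl h, Or.inr h], hd3q⟩
                · exact absurd h hc3q
                · subst h
                  exact ⟨c3, by rcases hF3 with h|h; exacts [Or.inl h.symm, Or.inr h.symm], hc3q⟩
                · exact absurd h hd3q
              obtain ⟨s, hFps, hsq⟩ := hF3'
              have hrs : r = s := by
                rcases hFmeet q r p s hFqr hFps with h|h|h|h
                · exact absurd h hpqne.symm
                · exact absurd h.symm hsq
                · exact absurd h hrp
                · exact h
              subst hrs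
              have hqr : q ≠ r := by rcases hFqr with h|h; exacts [h.ne, h.ne]
              have hpr : p ≠ r := fun h => hrp h.symm
              have hsub1 : ∀ x y, G₁.Adj x y →
                  x ∈ ({p, q, r} : Finset V) ∧ y ∈ ({p, q, r} : Finset V) := by
                intro x y h
                exact triSub hpqne hpr hqr (mG1 p q hpq x y h) (mG1 q r hFqr x y h)
                  (mG1 p r hFps x y h)
              have hs1 : ∑ v ∈ A, G₁.degree v ≤ 3 * (3 - 1) :=
                sumE G₁ hA _ 3 (triple_card_le p q r) hsub1
              omega
      · -- G₂ and G₃ both empty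
        push_neg at hF
        have hz2 : ∑ v ∈ A, G₂.degree v ≤ 3 * 0 :=
          sum3 hA _ 0 (fun v _ => by
            simpa using degLe G₂ (∅ : Finset V) (fun x hx => absurd hx (hF v x).1))
        have hz3 : ∑ v ∈ A, G₃.degree v ≤ 3 * 0 :=
          sum3 hA _ 0 (fun v _ => by
            simpa using degLe G₃ (∅ : Finset V) (fun x hx => absurd hx (hF v x).2))
        omega
    · -- case (i) : G₁'s edges pairwise intersect
      have hmeet : ∀ x y z t, G₁.Adj x y → G₁.Adj z t → x = z ∨ x = t ∨ y = z ∨ y = t := by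
        intro x y z t h h'
        by_contra hc
        push_neg at hc
        exact hdd ⟨x, y, z, t, h, h', hc.1, hc.2.1, hc.2.2.1, hc.2.2.2⟩
      by_cases hsa : ∀ x y, G₁.Adj x y → x = a ∨ y = a
      · exact starCase n hn hcard G₁ G₂ G₃ h12 h13 A hA a b hab hsa
      · by_cases hsb : ∀ x y, G₁.Adj x y → x = b ∨ y = b
        · exact starCase n hn hcard G₁ G₂ G₃ h12 h13 A hA b a hab.symm hsb
        · -- triangle in G₁
          push_neg at hsa hsb
          obtain ⟨x2, y2, hA2, hx2a, hy2a⟩ := hsa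
          obtain ⟨x3, y3, hA3, hx3b, hy3b⟩ := hsb
          have habne : a ≠ b := hab.ne
          have hbr' : ∃ r, G₁.Adj b r ∧ r ≠ a := by
            rcases hmeet a b x2 y2 hab hA2 with h|h|h|h
            · exact absurd h.symm hx2a
            · exact absurd h.symm hy2a
            · subst h
              exact ⟨y2, hA2, hy2a⟩
            · subst h
              exact ⟨x2, hA2.symm, hx2a⟩
          obtain ⟨r, hbr, hra⟩ := hbr'
          have has' : ∃ s, G₁.Adj a s ∧ s ≠ b := by
            rcases hmeet a b x3 y3 hab hA3 with h|h|h|h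
            · subst h
              exact ⟨y3, hA3, hy3b⟩
            · subst h
              exact ⟨x3, hA3.symm, hx3b⟩
            · exact absurd h.symm hx3b
            · exact absurd h.symm hy3b
          obtain ⟨s, has, hsb'⟩ := has'
          have hrs : r = s := by
            rcases hmeet b r a s hbr has with h|h|h|h
            · exact absurd h habne.symm
            · exact absurd h.symm hsb'
            · exact absurd h hra
            · exact h
          subst hrs
          have hbs : b ≠ r := hbr.ne
          have has2 : a ≠ r := has.ne
          have hsub1 : ∀ x y, G₁.Adj x y →
              x ∈ ({a, b, r} : Finset V) ∧ y ∈ ({a, b, r} : Finset V) := by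
            intro x y h
            exact triSub habne has2 hbs (orFlip (hmeet a b x y hab h))
              (orFlip (hmeet b r x y hbr h)) (orFlip (hmeet a r x y has h))
          have hsub2 : ∀ x y, G₂.Adj x y →
              x ∈ ({a, b, r} : Finset V) ∧ y ∈ ({a, b, r} : Finset V) := by
            intro x y h
            exact triSub habne has2 hbs (orFlip (pairInter (h12 a b x y hab h)))
              (orFlip (pairInter (h12 b r x y hbr h))) (orFlip (pairInter (h12 a r x y has h)))
          have hsub3 : ∀ x y, G₃.Adj x y →
              x ∈ ({a, b, r} : Finset V) ∧ y ∈ ({a, b, r} : Finset V) := by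
            intro x y h
            exact triSub habne has2 hbs (orFlip (pairInter (h13 a b x y hab h)))
              (orFlip (pairInter (h13 b r x y hbr h))) (orFlip (pairInter (h13 a r x y has h)))
          have hs1 : ∑ v ∈ A, G₁.degree v ≤ 3 * (3 - 1) :=
            sumE G₁ hA _ 3 (triple_card_le a b r) hsub1
          have hs2 : ∑ v ∈ A, G₂.degree v ≤ 3 * (3 - 1) :=
            sumE G₂ hA _ 3 (triple_card_le a b r) hsub2
          have hs3 : ∑ v ∈ A, G₃.degree v ≤ 3 * (3 - 1) :=
            sumE G₃ hA _ 3 (triple_card_le a b r) hsub3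
          omega
  · -- G₁ empty
    push_neg at hG1
    have hz1 : ∑ v ∈ A, G₁.degree v ≤ 3 * 0 :=
      sum3 hA _ 0 (fun v _ => by
        simpa using degLe G₁ (∅ : Finset V) (fun x hx => absurd hx (hG1 v x)))
    omega
end

section
/- Let $G_1, G_2, G_3$ be graphs on the same vertex set $V$ with $|V| = n \geq 5$, such that for all $i \neq j$, every edge of $G_i$ intersects every edge of $G_j$. Then for any set $A \subseteq V$ with $|A| = 3$, $\sum_{i=1}^{3} \sum_{v \in A} \deg_{G_i}(v) \leq 3(n+1)$. -/
open Finset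

section Aux

variable {V : Type*} [Fintype V] [DecidableEq V]

private lemma deg_le_sub {n : ℕ} (hcard : Fintype.card V = n)
    (G : SimpleGraph V) [DecidableRel G.Adj] (v : V) : G.degree v ≤ n - 1 := by
  have h1 : G.neighborFinset v ⊆ Finset.univ.erase v := by
    intro u hu
    rw [SimpleGraph.mem_neighborFinset] at hu
    exact Finset.mem_erase.mpr ⟨hu.ne', Finset.mem_univ u⟩
  have h2 := Finset.card_le_card h1
  rwa [Finset.card_erase_of_mem (Finset.mem_univ v), Finset.card_univ, hcard,
    SimpleGraph.card_neighborFinset_eq_degree] at h2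

private lemma deg_le_card (G : SimpleGraph V) [DecidableRel G.Adj] (v : V) (s : Finset V)
    (h : ∀ x, G.Adj v x → x ∈ s) : G.degree v ≤ s.card := by
  rw [← SimpleGraph.card_neighborFinset_eq_degree]
  exact Finset.card_le_card fun x hx => h x ((SimpleGraph.mem_neighborFinset _ _ _).mp hx)

private lemma deg_le_two (G : SimpleGraph V) [DecidableRel G.Adj] (v u w : V)
    (h : ∀ x, G.Adj v x → x = u ∨ x = w) : G.degree v ≤ 2 := by
  have := deg_le_card G v {u, w} (fun x hx => by rcases h x hx with h | h <;> simp [h])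
  exact this.trans ((Finset.card_insert_le _ _).trans (by simp))

private lemma deg_le_one (G : SimpleGraph V) [DecidableRel G.Adj] (v u : V)
    (h : ∀ x, G.Adj v x → x = u) : G.degree v ≤ 1 := by
  have := deg_le_card G v {u} (fun x hx => by simp [h x hx])
  simpa using this

private lemma deg_le_zero (G : SimpleGraph V) [DecidableRel G.Adj] (v : V)
    (h : ∀ x, ¬ G.Adj v x) : G.degree v ≤ 0 := by
  have := deg_le_card G v ∅ (fun x hx => absurd hx (h x))
  simpa using this

/-- Split a sum over a 3-element set: degree `≤ d` on `B`, `≤ c` off `B`. -/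
private lemma sum_bound (f : V → ℕ) (A B : Finset V) (hA : A.card = 3) (c d : ℕ)
    (hB : ∀ v ∈ B, f v ≤ d) (hC : ∀ v, v ∉ B → f v ≤ c) :
    ∃ k, k ≤ B.card ∧ k ≤ 3 ∧ ∑ v ∈ A, f v ≤ k * d + (3 - k) * c := by
  classical
  refine ⟨(A.filter (· ∈ B)).card, ?_, ?_, ?_⟩
  · exact Finset.card_le_card fun x hx => (Finset.mem_filter.mp hx).2
  · exact hA ▸ Finset.card_le_card (Finset.filter_subset _ _)
  · have hsplit := Finset.card_filter_add_card_filter_not (s := A) (p := (· ∈ B))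
    have h1 : ∑ v ∈ A.filter (· ∈ B), f v ≤ (A.filter (· ∈ B)).card * d := by
      calc ∑ v ∈ A.filter (· ∈ B), f v ≤ ∑ _v ∈ A.filter (· ∈ B), d :=
            Finset.sum_le_sum fun v hv => hB v (Finset.mem_filter.mp hv).2
        _ = _ := by rw [Finset.sum_const, smul_eq_mul]
    have h2 : ∑ v ∈ A.filter (fun v => ¬ v ∈ B), f v ≤ (A.filter (fun v => ¬ v ∈ B)).card * c := by
      calc ∑ v ∈ A.filter (fun v => ¬ v ∈ B), f v ≤ ∑ _v ∈ A.filter (fun v => ¬ v ∈ B), c :=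
            Finset.sum_le_sum fun v hv => hC v (Finset.mem_filter.mp hv).2
        _ = _ := by rw [Finset.sum_const, smul_eq_mul]
    have h3 : (A.filter (fun v => ¬ v ∈ B)).card = 3 - (A.filter (· ∈ B)).card := by omega
    rw [← Finset.sum_filter_add_sum_filter_not A (· ∈ B) f]
    exact (add_le_add h1 h2).trans (by rw [h3])

private lemma sum_deg_le_six (G : SimpleGraph V) [DecidableRel G.Adj] (A : Finset V)
    (hA : A.card = 3) (h : ∀ v, G.degree v ≤ 2) :
    ∑ v ∈ A, G.degree v ≤ 6 := by
  calc ∑ v ∈ A, G.degree v ≤ ∑ _v ∈ A, 2 := Finset.sum_le_sum fun v _ => h v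
    _ = 6 := by rw [Finset.sum_const, smul_eq_mul, hA]

/-- all edges meet `{u,w}` : sum over 3 vertices ≤ 2n -/
private lemma sum_deg_pair {n : ℕ} (hn : 5 ≤ n) (hcard : Fintype.card V = n)
    (G : SimpleGraph V) [DecidableRel G.Adj] (u w : V)
    (h : ∀ a b, G.Adj a b → a = u ∨ b = u ∨ a = w ∨ b = w)
    (A : Finset V) (hA : A.card = 3) : ∑ v ∈ A, G.degree v ≤ 2 * n := by
  obtain ⟨k, hk, hk3, hsum⟩ := sum_bound (fun v => G.degree v) A {u, w} hA 2 (n - 1)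
    (fun v _ => deg_le_sub hcard G v)
    (fun v hv => by
      simp only [Finset.mem_insert, Finset.mem_singleton, not_or] at hv
      exact deg_le_two G v u w (fun x hx => by
        rcases h v x hx with h' | h' | h' | h' <;> tauto))
  have hc2 : ({u, w} : Finset V).card ≤ 2 := (Finset.card_insert_le _ _).trans (by simp)
  have hk2 : k ≤ 2 := hk.trans hc2
  interval_cases k <;> omega

/-- star at y : sum ≤ n+1 -/
private lemma sum_deg_star {n : ℕ} (hn : 5 ≤ n) (hcard : Fintype.card V = n)
    (G : SimpleGraph V) [DecidableRel G.Adj] (y : V)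
    (h : ∀ a b, G.Adj a b → a = y ∨ b = y)
    (A : Finset V) (hA : A.card = 3) : ∑ v ∈ A, G.degree v ≤ n + 1 := by
  obtain ⟨k, hk, hk3, hsum⟩ := sum_bound (fun v => G.degree v) A {y} hA 1 (n - 1)
    (fun v _ => deg_le_sub hcard G v)
    (fun v hv => by
      simp only [Finset.mem_singleton] at hv
      exact deg_le_one G v y (fun x hx => by rcases h v x hx with h' | h' <;> tauto))
  have hk1 : k ≤ 1 := hk.trans (by simp)
  interval_cases k <;> omega

/-- star at y with neighbors among {s,t} : sum ≤ 4 -/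
private lemma sum_deg_star2 (G : SimpleGraph V) [DecidableRel G.Adj] (y s t : V)
    (h : ∀ a b, G.Adj a b → a = y ∨ b = y)
    (hnb : ∀ x, G.Adj y x → x = s ∨ x = t)
    (A : Finset V) (hA : A.card = 3) : ∑ v ∈ A, G.degree v ≤ 4 := by
  obtain ⟨k, hk, hk3, hsum⟩ := sum_bound (fun v => G.degree v) A {y} hA 1 2
    (fun v hv => by
      simp only [Finset.mem_singleton] at hv
      subst hv
      exact deg_le_two G v s t hnb)
    (fun v hv => by
      simp only [Finset.mem_singleton] at hv
      exact deg_le_one G v y (fun x hx => by rcases h v x hx with h' | h' <;> tauto))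
  have hk1 : k ≤ 1 := hk.trans (by simp)
  interval_cases k <;> omega

/-- all edges equal {u,w} : sum ≤ 2 -/
private lemma sum_deg_single (G : SimpleGraph V) [DecidableRel G.Adj] (u w : V)
    (h : ∀ a b, G.Adj a b → (a = u ∧ b = w) ∨ (a = w ∧ b = u))
    (A : Finset V) (hA : A.card = 3) : ∑ v ∈ A, G.degree v ≤ 2 := by
  obtain ⟨k, hk, hk3, hsum⟩ := sum_bound (fun v => G.degree v) A {u, w} hA 0 1
    (fun v hv => by
      simp only [Finset.mem_insert, Finset.mem_singleton] at hv
      refine deg_le_one G v (if v = u then w else u) (fun x hx => ?_)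
      rcases h v x hx with ⟨h1, h2⟩ | ⟨h1, h2⟩ <;> rcases hv with h3 | h3 <;> simp_all)
    (fun v hv => by
      simp only [Finset.mem_insert, Finset.mem_singleton, not_or] at hv
      exact deg_le_zero G v (fun x hx => by rcases h v x hx with ⟨rfl, _⟩ | ⟨rfl, _⟩ <;> tauto))
  have hc2 : ({u, w} : Finset V).card ≤ 2 := (Finset.card_insert_le _ _).trans (by simp)
  have hk2 : k ≤ 2 := hk.trans hc2
  interval_cases k <;> omega

end Aux

section Aux2

variable {V : Type*} [Fintype V] [DecidableEq V]

/-- star at y, extra possible edge {s,t} : sum ≤ n+3 -/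
private lemma sum_deg_starplus {n : ℕ} (hn : 5 ≤ n) (hcard : Fintype.card V = n)
    (G : SimpleGraph V) [DecidableRel G.Adj] (y s t : V) (hst : s ≠ t)
    (h : ∀ a b, G.Adj a b → a = y ∨ b = y ∨ (a = s ∧ b = t) ∨ (a = t ∧ b = s))
    (A : Finset V) (hA : A.card = 3) : ∑ v ∈ A, G.degree v ≤ n + 3 := by
  obtain ⟨k, hk, hk3, hsum⟩ := sum_bound (fun v => G.degree v) A {y} hA 2 (n - 1)
    (fun v _ => deg_le_sub hcard G v)
    (fun v hv => by
      simp only [Finset.mem_singleton] at hv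
      by_cases hvs : v = s
      · subst hvs
        exact deg_le_two G v y t (fun x hx => by
          rcases h v x hx with h' | h' | ⟨h1, h2⟩ | ⟨h1, h2⟩ <;> tauto)
      · by_cases hvt : v = t
        · subst hvt
          exact deg_le_two G v y s (fun x hx => by
            rcases h v x hx with h' | h' | ⟨h1, h2⟩ | ⟨h1, h2⟩ <;> tauto)
        · exact (deg_le_one G v y (fun x hx => by
            rcases h v x hx with h' | h' | ⟨h1, h2⟩ | ⟨h1, h2⟩ <;> tauto)).trans (by omega))
  have hk1 : k ≤ 1 := hk.trans (by simp)
  interval_cases k <;> omega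

/-- all edges inside {x,y,z} : sum ≤ 6 -/
private lemma sum_deg_tri (G : SimpleGraph V) [DecidableRel G.Adj] (x y z : V)
    (h : ∀ a b, G.Adj a b → (a = x ∨ a = y ∨ a = z) ∧ (b = x ∨ b = y ∨ b = z))
    (A : Finset V) (hA : A.card = 3) : ∑ v ∈ A, G.degree v ≤ 6 := by
  refine sum_deg_le_six G A hA (fun v => ?_)
  by_cases hvx : v = x
  · exact deg_le_two G v y z (fun w hw => by
      have h1 := (h v w hw).2
      have h2 : w ≠ v := hw.ne'
      subst hvx; tauto)
  · by_cases hvy : v = y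
    · exact deg_le_two G v x z (fun w hw => by
        have h1 := (h v w hw).2
        have h2 : w ≠ v := hw.ne'
        subst hvy; tauto)
    · by_cases hvz : v = z
      · exact deg_le_two G v x y (fun w hw => by
          have h1 := (h v w hw).2
          have h2 : w ≠ v := hw.ne'
          subst hvz; tauto)
      · exact (deg_le_zero G v (fun w hw => by
          have h1 := (h v w hw).1
          tauto)).trans (by omega)

private lemma cross_flip {G H : SimpleGraph V}
    (h : ∀ a b c d : V, G.Adj a b → H.Adj c d → a = c ∨ a = d ∨ b = c ∨ b = d) :
    ∀ a b c d : V, H.Adj a b → G.Adj c d → a = c ∨ a = d ∨ b = c ∨ b = d := by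
  intro a b c d h1 h2
  have := h c d a b h2 h1
  tauto

private lemma three_logic {α : Sort*} {a b s t r : α}
    (e1 : a = s ∨ b = s) (e2 : a = t ∨ b = t) (e3 : a = r ∨ b = r)
    (hts : t ≠ s) (hrs : r ≠ s) (hrt : r ≠ t) : False := by
  rcases e1 with rfl | rfl <;> rcases e2 with h' | h' <;> rcases e3 with h'' | h'' <;>
    subst_vars <;> tauto

private lemma two_logic {α : Sort*} {a b s t : α}
    (e1 : a = s ∨ b = s) (e2 : a = t ∨ b = t) (hst : s ≠ t) (hab : a ≠ b) :
    (a = s ∧ b = t) ∨ (a = t ∧ b = s) := by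
  rcases e1 with rfl | rfl <;> rcases e2 with h' | h' <;> subst_vars <;> tauto

private lemma tri_logic {α : Sort*} {a b x y z : α}
    (c1 : a = x ∨ a = y ∨ b = x ∨ b = y) (c2 : a = x ∨ a = z ∨ b = x ∨ b = z)
    (c3 : a = y ∨ a = z ∨ b = y ∨ b = z)
    (hxy : x ≠ y) (hxz : x ≠ z) (hyz : y ≠ z) :
    (a = x ∨ a = y ∨ a = z) ∧ (b = x ∨ b = y ∨ b = z) := by
  rcases c1 with rfl | rfl | rfl | rfl <;> rcases c2 with h' | h' | h' | h' <;>
    rcases c3 with h'' | h'' | h'' | h'' <;> subst_vars <;> tauto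

/-- The case where `H` is a star. -/
private lemma star_case {n : ℕ} (hn : 5 ≤ n) (hcard : Fintype.card V = n)
    (G H : SimpleGraph V) [DecidableRel G.Adj] [DecidableRel H.Adj]
    (hGH : ∀ a b c d : V, G.Adj a b → H.Adj c d → a = c ∨ a = d ∨ b = c ∨ b = d)
    (y s : V) (hys : H.Adj y s)
    (hstar : ∀ a b : V, H.Adj a b → a = y ∨ b = y)
    (A : Finset V) (hA : A.card = 3) :
    ∑ v ∈ A, G.degree v + ∑ v ∈ A, H.degree v ≤ 2 * n + 2 := by
  by_cases h2 : ∃ t, H.Adj y t ∧ t ≠ s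
  · obtain ⟨t, hyt, hts⟩ := h2
    by_cases h3 : ∃ r, H.Adj y r ∧ r ≠ s ∧ r ≠ t
    · obtain ⟨r, hyr, hrs, hrt⟩ := h3
      have hGstar : ∀ a b, G.Adj a b → a = y ∨ b = y := by
        intro a b hab
        by_contra hcon
        push_neg at hcon
        obtain ⟨hay, hby⟩ := hcon
        have c1 := hGH a b y s hab hys
        have c2 := hGH a b y t hab hyt
        have c3 := hGH a b y r hab hyr
        have e1 : a = s ∨ b = s := by tauto
        have e2 : a = t ∨ b = t := by tauto
        have e3 : a = r ∨ b = r := by tauto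
        exact three_logic e1 e2 e3 hts hrs hrt
      have b1 := sum_deg_star hn hcard G y hGstar A hA
      have b2 := sum_deg_star hn hcard H y hstar A hA
      omega
    · push_neg at h3
      -- neighbors of y are among {s, t}
      have hnb : ∀ x, H.Adj y x → x = s ∨ x = t := by
        intro x hx
        by_cases hxs : x = s
        · exact Or.inl hxs
        · exact Or.inr (h3 x hx hxs)
      have b2 := sum_deg_star2 H y s t hstar hnb A hA
      have hGsp : ∀ a b, G.Adj a b → a = y ∨ b = y ∨ (a = s ∧ b = t) ∨ (a = t ∧ b = s) := by
        intro a b hab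
        by_cases hay : a = y
        · exact Or.inl hay
        by_cases hby : b = y
        · exact Or.inr (Or.inl hby)
        have c1 := hGH a b y s hab hys
        have c2 := hGH a b y t hab hyt
        have e1 : a = s ∨ b = s := by tauto
        have e2 : a = t ∨ b = t := by tauto
        exact (two_logic e1 e2 (fun h => hts h.symm) hab.ne).elim
          (fun h => Or.inr (Or.inr (Or.inl h))) (fun h => Or.inr (Or.inr (Or.inr h)))
      have b1 := sum_deg_starplus hn hcard G y s t (fun h => hts h.symm) hGsp A hA
      omega
  · push_neg at h2
    -- H is the single edge {y, s}
    have hsingle : ∀ a b, H.Adj a b → (a = y ∧ b = s) ∨ (a = s ∧ b = y) := by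
      intro a b hab
      rcases hstar a b hab with rfl | rfl
      · exact Or.inl ⟨rfl, h2 b hab⟩
      · exact Or.inr ⟨h2 a hab.symm, rfl⟩
    have b2 := sum_deg_single H y s hsingle A hA
    have b1 : ∑ v ∈ A, G.degree v ≤ 2 * n := by
      refine sum_deg_pair hn hcard G y s (fun a b hab => ?_) A hA
      have := hGH a b y s hab hys
      tauto
    omega

/-- The case where `H` is contained in a triangle (with all three edges present). -/
private lemma tri_case {n : ℕ} (hn : 5 ≤ n) (hcard : Fintype.card V = n)
    (G H : SimpleGraph V) [DecidableRel G.Adj] [DecidableRel H.Adj]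
    (hGH : ∀ a b c d : V, G.Adj a b → H.Adj c d → a = c ∨ a = d ∨ b = c ∨ b = d)
    (x y z : V) (hxy : H.Adj x y) (hxz : H.Adj x z) (hyz : H.Adj y z)
    (hT : ∀ a b, H.Adj a b → (a = x ∨ a = y ∨ a = z) ∧ (b = x ∨ b = y ∨ b = z))
    (A : Finset V) (hA : A.card = 3) :
    ∑ v ∈ A, G.degree v + ∑ v ∈ A, H.degree v ≤ 2 * n + 2 := by
  have hGT : ∀ a b, G.Adj a b → (a = x ∨ a = y ∨ a = z) ∧ (b = x ∨ b = y ∨ b = z) := by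
    intro a b hab
    have c1 := hGH a b x y hab hxy
    have c2 := hGH a b x z hab hxz
    have c3 := hGH a b y z hab hyz
    exact tri_logic c1 c2 c3 hxy.ne hxz.ne hyz.ne
  have b1 := sum_deg_tri G x y z hGT A hA
  have b2 := sum_deg_tri H x y z hT A hA
  omega

end Aux2

section Aux3

variable {V : Type*} [Fintype V] [DecidableEq V]

/-- Classification of a nonempty graph: it has two disjoint edges, or is a star,
or is contained in a triangle with all three edges present. -/
private lemma classify (K : SimpleGraph V) [DecidableRel K.Adj] {u w : V} (huw : K.Adj u w) :
    (∃ a b c d, K.Adj a b ∧ K.Adj c d ∧ a ≠ c ∧ a ≠ d ∧ b ≠ c ∧ b ≠ d) ∨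
    (∃ y s, K.Adj y s ∧ ∀ a b, K.Adj a b → a = y ∨ b = y) ∨
    (∃ x y z, K.Adj x y ∧ K.Adj x z ∧ K.Adj y z ∧
      ∀ a b, K.Adj a b → (a = x ∨ a = y ∨ a = z) ∧ (b = x ∨ b = y ∨ b = z)) := by
  classical
  by_cases hu : ∀ a b, K.Adj a b → a = u ∨ b = u
  · exact Or.inr (Or.inl ⟨u, w, huw, hu⟩)
  by_cases hw : ∀ a b, K.Adj a b → a = w ∨ b = w
  · exact Or.inr (Or.inl ⟨w, u, huw.symm, hw⟩)
  push_neg at hu hw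
  obtain ⟨a1, b1, he1, ha1, hb1⟩ := hu
  obtain ⟨a2, b2, he2, ha2, hb2⟩ := hw
  by_cases hw1 : a1 = w ∨ b1 = w
  · by_cases hu2 : a2 = u ∨ b2 = u
    · -- normalize: edge {w, t} with t ≠ u, edge {u, s} with s ≠ w
      have hwt : ∃ t, K.Adj w t ∧ t ≠ u := by
        rcases hw1 with rfl | rfl
        · exact ⟨b1, he1, hb1⟩
        · exact ⟨a1, he1.symm, ha1⟩
      have hus : ∃ s, K.Adj u s ∧ s ≠ w := by
        rcases hu2 with rfl | rfl
        · exact ⟨b2, he2, hb2⟩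
        · exact ⟨a2, he2.symm, ha2⟩
      obtain ⟨t, hwt', htu⟩ := hwt
      obtain ⟨s, hus', hsw⟩ := hus
      by_cases hts : t = s
      · subst hts
        -- triangle u, w, t
        by_cases hall : ∀ a b, K.Adj a b →
            (a = u ∨ a = w ∨ a = t) ∧ (b = u ∨ b = w ∨ b = t)
        · exact Or.inr (Or.inr ⟨u, w, t, huw, hus', hwt', hall⟩)
        · push_neg at hall
          obtain ⟨a, b, hab, hnot⟩ := hall
          have key : ∀ p q, K.Adj p q → ¬(p = u ∨ p = w ∨ p = t) →
              ∃ a b c d, K.Adj a b ∧ K.Adj c d ∧ a ≠ c ∧ a ≠ d ∧ b ≠ c ∧ b ≠ d := by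
            intro p q hpq hp
            push_neg at hp
            obtain ⟨hpu, hpw, hpt⟩ := hp
            by_cases hqu : q = u
            · subst hqu
              exact ⟨p, q, w, t, hpq, hwt', hpw, hpt, huw.ne, hus'.ne⟩
            · by_cases hqw : q = w
              · subst hqw
                exact ⟨p, q, u, t, hpq, hus', hpu, hpt, huw.ne', hwt'.ne⟩
              · exact ⟨p, q, u, w, hpq, huw, hpu, hpw, hqu, hqw⟩
          by_cases hna : a = u ∨ a = w ∨ a = t
          · have hb := hnot hna
            exact Or.inl (key b a hab.symm (by tauto))
          · exact Or.inl (key a b hab hna)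
      · -- edges {w,t} and {u,s} are disjoint
        exact Or.inl ⟨w, t, u, s, hwt', hus', huw.ne', fun h => hsw h.symm, htu, hts⟩
    · push_neg at hu2
      obtain ⟨h1, h2⟩ := hu2
      exact Or.inl ⟨u, w, a2, b2, huw, he2, fun h => h1 h.symm, fun h => h2 h.symm,
        fun h => ha2 h.symm, fun h => hb2 h.symm⟩
  · push_neg at hw1
    obtain ⟨h1, h2⟩ := hw1
    exact Or.inl ⟨u, w, a1, b1, huw, he1, fun h => ha1 h.symm, fun h => hb1 h.symm,
      fun h => h1 h.symm, fun h => h2 h.symm⟩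

/-- If `H` has two disjoint edges, every degree in `G` is at most 2. -/
private lemma deg_le_two_of_matching (G H : SimpleGraph V)
    [DecidableRel G.Adj] [DecidableRel H.Adj]
    (hGH : ∀ a b c d : V, G.Adj a b → H.Adj c d → a = c ∨ a = d ∨ b = c ∨ b = d)
    {a b c d : V} (hab : H.Adj a b) (hcd : H.Adj c d)
    (hac : a ≠ c) (had : a ≠ d) (hbc : b ≠ c) (hbd : b ≠ d)
    (v : V) : G.degree v ≤ 2 := by
  by_cases hv : v = a ∨ v = b
  · refine deg_le_two G v c d (fun x hx => ?_)
    have := hGH v x c d hx hcd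
    rcases hv with rfl | rfl <;> tauto
  · push_neg at hv
    refine deg_le_two G v a b (fun x hx => ?_)
    have := hGH v x a b hx hab
    tauto

/-- Main pairwise bound: two nonempty cross-intersecting graphs. -/
private lemma pairP {n : ℕ} (hn : 5 ≤ n) (hcard : Fintype.card V = n)
    (G H : SimpleGraph V) [DecidableRel G.Adj] [DecidableRel H.Adj]
    (hGH : ∀ a b c d : V, G.Adj a b → H.Adj c d → a = c ∨ a = d ∨ b = c ∨ b = d)
    {p q u w : V} (hpq : G.Adj p q) (huw : H.Adj u w)
    (A : Finset V) (hA : A.card = 3) :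
    ∑ v ∈ A, G.degree v + ∑ v ∈ A, H.degree v ≤ 2 * n + 2 := by
  rcases classify H huw with ⟨a, b, c, d, hab, hcd, hac, had, hbc, hbd⟩ |
    ⟨y, s, hys, hstar⟩ | ⟨x, y, z, h1, h2, h3, hT⟩
  · -- H has two disjoint edges, hence ∑ deg G ≤ 6
    have bG : ∑ v ∈ A, G.degree v ≤ 6 :=
      sum_deg_le_six G A hA (deg_le_two_of_matching G H hGH hab hcd hac had hbc hbd)
    rcases classify G hpq with ⟨a', b', c', d', hab', hcd', hac', had', hbc', hbd'⟩ |
      ⟨y, s, hys, hstar⟩ | ⟨x, y, z, h1, h2, h3, hT⟩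
    · have bH : ∑ v ∈ A, H.degree v ≤ 6 :=
        sum_deg_le_six H A hA
          (deg_le_two_of_matching H G (cross_flip hGH) hab' hcd' hac' had' hbc' hbd')
      omega
    · have := star_case hn hcard H G (cross_flip hGH) y s hys hstar A hA
      omega
    · have := tri_case hn hcard H G (cross_flip hGH) x y z h1 h2 h3 hT A hA
      omega
  · exact star_case hn hcard G H hGH y s hys hstar A hA
  · exact tri_case hn hcard G H hGH x y z h1 h2 h3 hT A hA

private lemma sum_deg_empty (G : SimpleGraph V) [DecidableRel G.Adj]
    (h : ¬ ∃ a b, G.Adj a b) (A : Finset V) : ∑ v ∈ A, G.degree v = 0 := by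
  push_neg at h
  refine Finset.sum_eq_zero (fun v _ => ?_)
  exact Nat.le_zero.mp (deg_le_zero G v (fun x hx => h v x hx))

private lemma sum_deg_three {n : ℕ} (hcard : Fintype.card V = n)
    (G : SimpleGraph V) [DecidableRel G.Adj] (A : Finset V) (hA : A.card = 3) :
    ∑ v ∈ A, G.degree v ≤ 3 * (n - 1) := by
  calc ∑ v ∈ A, G.degree v ≤ ∑ _v ∈ A, (n - 1) :=
        Finset.sum_le_sum fun v _ => deg_le_sub hcard G v
    _ = 3 * (n - 1) := by rw [Finset.sum_const, smul_eq_mul, hA]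

private lemma cross_of (G H : SimpleGraph V)
    (h : ∀ a b c d : V, G.Adj a b → H.Adj c d → (({a, b} : Finset V) ∩ {c, d}).Nonempty) :
    ∀ a b c d : V, G.Adj a b → H.Adj c d → a = c ∨ a = d ∨ b = c ∨ b = d := by
  intro a b c d h1 h2
  obtain ⟨x, hx⟩ := h a b c d h1 h2
  simp only [Finset.mem_inter, Finset.mem_insert, Finset.mem_singleton] at hx
  obtain ⟨h3 | h3, h4 | h4⟩ := hx <;> subst h3 <;> tauto

end Aux3

open Finset

/-- Lemma 7 of Zhang–Zhao–Lu. -/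
theorem stmt6 {V : Type*} [Fintype V] [DecidableEq V] (n : ℕ) (hn : 5 ≤ n)
    (hcard : Fintype.card V = n)
    (G₁ G₂ G₃ : SimpleGraph V)
    [DecidableRel G₁.Adj] [DecidableRel G₂.Adj] [DecidableRel G₃.Adj]
    (h12 : ∀ a b c d : V, G₁.Adj a b → G₂.Adj c d →
      (({a, b} : Finset V) ∩ {c, d}).Nonempty)
    (h13 : ∀ a b c d : V, G₁.Adj a b → G₃.Adj c d →
      (({a, b} : Finset V) ∩ {c, d}).Nonempty)
    (h23 : ∀ a b c d : V, G₂.Adj a b → G₃.Adj c d →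
      (({a, b} : Finset V) ∩ {c, d}).Nonempty)
    (A : Finset V) (hA : A.card = 3) :
    ∑ v ∈ A, (G₁.degree v + G₂.degree v + G₃.degree v) ≤ 3 * (n + 1) := by
  classical
  have c12 := cross_of G₁ G₂ h12
  have c13 := cross_of G₁ G₃ h13
  have c23 := cross_of G₂ G₃ h23
  have hsum : ∑ v ∈ A, (G₁.degree v + G₂.degree v + G₃.degree v) =
      ∑ v ∈ A, G₁.degree v + ∑ v ∈ A, G₂.degree v + ∑ v ∈ A, G₃.degree v := by
    rw [Finset.sum_add_distrib, Finset.sum_add_distrib]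
  rw [hsum]
  have s1 := sum_deg_three hcard G₁ A hA
  have s2 := sum_deg_three hcard G₂ A hA
  have s3 := sum_deg_three hcard G₃ A hA
  by_cases h1e : ∃ a b, G₁.Adj a b
  · obtain ⟨p1, q1, e1⟩ := h1e
    by_cases h2e : ∃ a b, G₂.Adj a b
    · obtain ⟨p2, q2, e2⟩ := h2e
      by_cases h3e : ∃ a b, G₃.Adj a b
      · obtain ⟨p3, q3, e3⟩ := h3e
        have P12 := pairP hn hcard G₁ G₂ c12 e1 e2 A hA
        have P13 := pairP hn hcard G₁ G₃ c13 e1 e3 A hA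
        have P23 := pairP hn hcard G₂ G₃ c23 e2 e3 A hA
        omega
      · have z3 := sum_deg_empty G₃ h3e A
        have P12 := pairP hn hcard G₁ G₂ c12 e1 e2 A hA
        omega
    · have z2 := sum_deg_empty G₂ h2e A
      by_cases h3e : ∃ a b, G₃.Adj a b
      · obtain ⟨p3, q3, e3⟩ := h3e
        have P13 := pairP hn hcard G₁ G₃ c13 e1 e3 A hA
        omega
      · have z3 := sum_deg_empty G₃ h3e A
        omega
  · have z1 := sum_deg_empty G₁ h1e A
    by_cases h2e : ∃ a b, G₂.Adj a b
    · obtain ⟨p2, q2, e2⟩ := h2e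
      by_cases h3e : ∃ a b, G₃.Adj a b
      · obtain ⟨p3, q3, e3⟩ := h3e
        have P23 := pairP hn hcard G₂ G₃ c23 e2 e3 A hA
        omega
      · have z3 := sum_deg_empty G₃ h3e A
        omega
    · have z2 := sum_deg_empty G₂ h2e A
      omega
end

section
/- Let $A = \{u_1, \ldots, u_a\}$ and $B = \{v_1, \ldots, v_b\}$ be disjoint vertex sets with $a \geq 2$, $b \geq 1$, and let $G_1, G_2, G_3$ be graphs on $A \cup B$. Suppose: every vertex of $B$ is isolated in $G_1$; every edge of $G_2$ and of $G_3$ contains at least one vertex of $A$; every edge of $G_1$ intersects every edge of $G_j$ that contains a vertex of $B$, for $j = 2, 3$; and every edge of $G_2$ containing a vertex of $B$ intersects every edge of $G_3$ containing a vertex of $B$. Then $\sum_{i=1}^{3}\left(\deg_{G_i}(u_1) + \deg_{G_i}(u_2) + \deg_{G_i}(v_1)\right) \leq \max\{6a+2,\; 5a+2b+2\}$. -/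
open Finset

private lemma degle {V : Type*} [Fintype V] [DecidableEq V] (G : SimpleGraph V)
    [DecidableRel G.Adj] (w : V) (s : Finset V) (h : ∀ x, G.Adj w x → x ∈ s) :
    G.degree w ≤ s.card := by
  rw [← SimpleGraph.card_neighborFinset_eq_degree]
  exact card_le_card fun x hx => h x (by simpa using hx)

private lemma deg_v_le {V : Type*} [Fintype V] [DecidableEq V] (G : SimpleGraph V)
    [DecidableRel G.Adj] (v : V) (s : Finset V) (h : ∀ y, G.Adj y v → y ∈ s) :
    G.degree v ≤ s.card :=
  degle G v s fun x hx => h x hx.symm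

private lemma degsplit {V : Type*} [Fintype V] [DecidableEq V] (G : SimpleGraph V)
    [DecidableRel G.Adj] (A B : Finset V) (hab : ∀ x : V, x ∈ A ∨ x ∈ B)
    (u : V) (hu : u ∈ A) (t : Finset V)
    (ht : ∀ w, G.Adj u w → w ∈ B → w ∈ t) :
    G.degree u ≤ (A.card - 1) + t.card := by
  have h := degle G u (A.erase u ∪ t) ?_
  · calc G.degree u ≤ (A.erase u ∪ t).card := h
      _ ≤ (A.erase u).card + t.card := card_union_le _ _
      _ = (A.card - 1) + t.card := by rw [card_erase_of_mem hu]
  · intro x hx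
    rcases hab x with h' | h'
    · exact mem_union_left _ (mem_erase.mpr ⟨(G.ne_of_adj hx).symm, h'⟩)
    · exact mem_union_right _ (ht x hx h')

private lemma cross_struct {V : Type*} (E₂ E₃ : V → V → Prop)
    (cross : ∀ y w z t, E₂ y w → E₃ z t → y = z ∨ w = t)
    (hne2 : ∃ y w, E₂ y w)
    (hnocomm : ∀ p : V, ∃ y w, (E₂ y w ∨ E₃ y w) ∧ p ≠ y ∧ p ≠ w) :
    (∃ x v, ∀ y w, E₂ y w → y = x ∧ w = v) ∨
    (∃ x x' v v', x ≠ x' ∧ v ≠ v' ∧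
      ∀ y w, E₃ y w → (y = x ∧ w = v') ∨ (y = x' ∧ w = v)) := by
  obtain ⟨x, v, hxv⟩ := hne2
  have pairlem : ∀ p q r s, E₂ p q → E₂ r s → p ≠ r → q ≠ s →
      (∃ x x' v v', x ≠ x' ∧ v ≠ v' ∧
        ∀ y w, E₃ y w → (y = x ∧ w = v') ∨ (y = x' ∧ w = v)) := by
    intro p q r s h1 h2 hpr hqs
    refine ⟨p, r, q, s, hpr, hqs, ?_⟩
    intro y w h3
    rcases cross p q y w h1 h3 with hc | hc
    · rcases cross r s y w h2 h3 with hc' | hc'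
      · exact absurd (hc.trans hc'.symm) hpr
      · exact Or.inl ⟨hc.symm, hc'.symm⟩
    · rcases cross r s y w h2 h3 with hc' | hc'
      · exact Or.inr ⟨hc'.symm, hc.symm⟩
      · exact absurd (hc.trans hc'.symm) hqs
  by_cases hall : ∀ y w, E₂ y w → y = x
  · obtain ⟨y₀, w₀, hE, hpy, hpw⟩ := hnocomm x
    rcases hE with h2 | h3
    · exact absurd (hall _ _ h2).symm hpy
    · left
      refine ⟨x, w₀, fun y w hyw => ⟨hall y w hyw, ?_⟩⟩
      rcases cross y w y₀ w₀ hyw h3 with h | h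
      · exact absurd ((hall y w hyw).symm.trans h) hpy
      · exact h
  · push_neg at hall
    obtain ⟨x', v', hx'v', hx'⟩ := hall
    by_cases hvv : v' = v
    · by_cases hEv : ∃ p q, E₂ p q ∧ q ≠ v
      · obtain ⟨p, q, hpq, hq⟩ := hEv
        by_cases hpx : p = x
        · exact Or.inr (pairlem x' v' p q hx'v' hpq (fun h => hx' (h.trans hpx))
            (fun h => hq (h.symm.trans hvv)))
        · exact Or.inr (pairlem x v p q hxv hpq (fun h => hpx h.symm) (fun h => hq h.symm))
      · push_neg at hEv
        obtain ⟨y₀, w₀, hE, hpy, hpw⟩ := hnocomm v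
        rcases hE with h2 | h3
        · exact absurd (hEv _ _ h2).symm hpw
        · have h1 : x = y₀ := by
            rcases cross x v y₀ w₀ hxv h3 with h | h
            · exact h
            · exact absurd h hpw
          have h2 : x' = y₀ := by
            rcases cross x' v' y₀ w₀ hx'v' h3 with h | h
            · exact h
            · exact absurd (hvv.symm.trans h) hpw
          exact absurd (h2.trans h1.symm) hx'
    · exact Or.inr (pairlem x v x' v' hxv hx'v' (fun h => hx' h.symm) (fun h => hvv h.symm))

/-- Lemma 16 of Zhang–Lu. -/
theorem stmt7 {V : Type*} [Fintype V] [DecidableEq V]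
    (A B : Finset V) (hAB : Disjoint A B) (hcover : A ∪ B = Finset.univ)
    (a b : ℕ) (hA : A.card = a) (hB : B.card = b) (ha : 2 ≤ a) (hb : 1 ≤ b)
    (u₁ u₂ : V) (hu₁ : u₁ ∈ A) (hu₂ : u₂ ∈ A) (hu : u₁ ≠ u₂)
    (v₁ : V) (hv₁ : v₁ ∈ B)
    (G₁ G₂ G₃ : SimpleGraph V)
    [DecidableRel G₁.Adj] [DecidableRel G₂.Adj] [DecidableRel G₃.Adj]
    (hBiso : ∀ v ∈ B, ∀ w : V, ¬ G₁.Adj v w)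
    (hA2 : ∀ x y : V, G₂.Adj x y → x ∈ A ∨ y ∈ A)
    (hA3 : ∀ x y : V, G₃.Adj x y → x ∈ A ∨ y ∈ A)
    (h12 : ∀ x y z w : V, G₁.Adj x y → G₂.Adj z w → (z ∈ B ∨ w ∈ B) →
      (({x, y} : Finset V) ∩ {z, w}).Nonempty)
    (h13 : ∀ x y z w : V, G₁.Adj x y → G₃.Adj z w → (z ∈ B ∨ w ∈ B) →
      (({x, y} : Finset V) ∩ {z, w}).Nonempty)
    (h23 : ∀ x y z w : V, G₂.Adj x y → (x ∈ B ∨ y ∈ B) → G₃.Adj z w → (z ∈ B ∨ w ∈ B) →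
      (({x, y} : Finset V) ∩ {z, w}).Nonempty) :
    (G₁.degree u₁ + G₁.degree u₂ + G₁.degree v₁) +
    (G₂.degree u₁ + G₂.degree u₂ + G₂.degree v₁) +
    (G₃.degree u₁ + G₃.degree u₂ + G₃.degree v₁) ≤
      max (6 * a + 2) (5 * a + 2 * b + 2) := by
  classical
  have hdAB : ∀ x : V, x ∈ A → x ∈ B → False :=
    fun x hx hbx => (Finset.disjoint_left.mp hAB) hx hbx
  have hab : ∀ x : V, x ∈ A ∨ x ∈ B := by
    intro x
    have hx : x ∈ A ∪ B := by rw [hcover]; exact mem_univ x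
    exact mem_union.mp hx
  have hA2' : ∀ y w, G₂.Adj y w → w ∈ B → y ∈ A := fun y w h hw =>
    (hA2 y w h).resolve_right fun h' => (hdAB w h' hw).elim
  have hA3' : ∀ y w, G₃.Adj y w → w ∈ B → y ∈ A := fun y w h hw =>
    (hA3 y w h).resolve_right fun h' => (hdAB w h' hw).elim
  have h1A : ∀ p q, G₁.Adj p q → p ∈ A :=
    fun p q h => (hab p).resolve_right fun hbp => (hBiso p hbp q h).elim
  -- basic degree facts
  have d1v : G₁.degree v₁ = 0 := by
    have := degle G₁ v₁ ∅ (fun x hx => (hBiso v₁ hv₁ x hx).elim)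
    simpa using this
  have d1u : ∀ u, u ∈ A → G₁.degree u ≤ a - 1 := by
    intro u hu'
    have h := degle G₁ u (A.erase u)
      (fun x hx => mem_erase.mpr ⟨(G₁.ne_of_adj hx).symm, h1A x u hx.symm⟩)
    rwa [card_erase_of_mem hu', hA] at h
  have d2vA : G₂.degree v₁ ≤ a := by
    have := deg_v_le G₂ v₁ A (fun y hy => hA2' y v₁ hy hv₁)
    rwa [hA] at this
  have d3vA : G₃.degree v₁ ≤ a := by
    have := deg_v_le G₃ v₁ A (fun y hy => hA3' y v₁ hy hv₁)
    rwa [hA] at this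
  have d2uB : ∀ u, u ∈ A → G₂.degree u ≤ a - 1 + b := by
    intro u hu'
    have := degsplit G₂ A B hab u hu' B (fun w _ hw => hw)
    rwa [hA, hB] at this
  have d3uB : ∀ u, u ∈ A → G₃.degree u ≤ a - 1 + b := by
    intro u hu'
    have := degsplit G₃ A B hab u hu' B (fun w _ hw => hw)
    rwa [hA, hB] at this
  -- the star property of G₁ edges
  have star : ∀ z w, ((G₂.Adj z w ∧ w ∈ B) ∨ (G₃.Adj z w ∧ w ∈ B)) →
      ∀ p q, G₁.Adj p q → p = z ∨ q = z := by
    intro z w hzw p q hpq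
    have hpA := h1A p q hpq
    have hqA := h1A q p hpq.symm
    have hr : ∃ r, (r = p ∨ r = q) ∧ (r = z ∨ r = w) := by
      rcases hzw with ⟨h', hw⟩ | ⟨h', hw⟩
      · obtain ⟨r, hr⟩ := h12 p q z w hpq h' (Or.inr hw)
        simp only [mem_inter, mem_insert, mem_singleton] at hr
        exact ⟨r, hr⟩
      · obtain ⟨r, hr⟩ := h13 p q z w hpq h' (Or.inr hw)
        simp only [mem_inter, mem_insert, mem_singleton] at hr
        exact ⟨r, hr⟩
    have hwB : w ∈ B := by rcases hzw with ⟨_, hw⟩ | ⟨_, hw⟩ <;> exact hw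
    obtain ⟨r, h₁, h₂⟩ := hr
    rcases h₂ with h₂ | h₂
    · rcases h₁ with h₁ | h₁
      · exact Or.inl (h₁.symm.trans h₂)
      · exact Or.inr (h₁.symm.trans h₂)
    · rcases h₁ with h₁ | h₁
      · exact (hdAB p hpA (by rw [h₁.symm.trans h₂]; exact hwB)).elim
      · exact (hdAB q hqA (by rw [h₁.symm.trans h₂]; exact hwB)).elim
  -- cross-intersection for B-edges of G₂, G₃
  have cross23 : ∀ y w z t, G₂.Adj y w ∧ w ∈ B → G₃.Adj z t ∧ t ∈ B → y = z ∨ w = t := by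
    rintro y w z t ⟨h2, hw⟩ ⟨h3, ht⟩
    have hyA := hA2' y w h2 hw
    have hzA := hA3' z t h3 ht
    obtain ⟨r, hr⟩ := h23 y w z t h2 (Or.inr hw) h3 (Or.inr ht)
    simp only [mem_inter, mem_insert, mem_singleton] at hr
    obtain ⟨h₁, h₂⟩ := hr
    rcases h₁ with h₁ | h₁ <;> rcases h₂ with h₂ | h₂
    · exact Or.inl (h₁.symm.trans h₂)
    · exact (hdAB y hyA (by rw [h₁.symm.trans h₂]; exact ht)).elim
    · exact (hdAB z hzA (by rw [h₂.symm.trans h₁]; exact hw)).elim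
    · exact Or.inr (h₁.symm.trans h₂)
  by_cases hP : ∃ z w, (G₂.Adj z w ∧ w ∈ B) ∨ (G₃.Adj z w ∧ w ∈ B)
  · obtain ⟨z₀, w₀, hE₀⟩ := hP
    have hz₀A : z₀ ∈ A := by
      rcases hE₀ with ⟨h, hw⟩ | ⟨h, hw⟩
      exacts [hA2' _ _ h hw, hA3' _ _ h hw]
    have hw₀B : w₀ ∈ B := by rcases hE₀ with ⟨_, hw⟩ | ⟨_, hw⟩ <;> exact hw
    by_cases hX : ∀ y w, ((G₂.Adj y w ∧ w ∈ B) ∨ (G₃.Adj y w ∧ w ∈ B)) → y = z₀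
    · -- Case 2: all B-edges share A-endpoint z₀
      have st := star z₀ w₀ hE₀
      have d1small : ∀ x, x ≠ z₀ → G₁.degree x ≤ 1 := by
        intro x hx
        have := degle G₁ x {z₀} (fun p hp => by
          rcases st x p hp with h | h
          · exact absurd h hx
          · simp [h])
        simpa using this
      have hS1 : G₁.degree u₁ + G₁.degree u₂ ≤ a := by
        rcases eq_or_ne u₁ z₀ with h1 | h1
        · have b1 := d1u u₁ hu₁
          have b2 := d1small u₂ (fun h => hu (h1.trans h.symm))
          omega
        · rcases eq_or_ne u₂ z₀ with h2 | h2
          · have b1 := d1small u₁ h1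
            have b2 := d1u u₂ hu₂
            omega
          · have b1 := d1small u₁ h1
            have b2 := d1small u₂ h2
            omega
      have hd2v : G₂.degree v₁ ≤ 1 := by
        have := deg_v_le G₂ v₁ {z₀} (fun y hy => by
          simp [hX y v₁ (Or.inl ⟨hy, hv₁⟩)])
        simpa using this
      have hd3v : G₃.degree v₁ ≤ 1 := by
        have := deg_v_le G₃ v₁ {z₀} (fun y hy => by
          simp [hX y v₁ (Or.inr ⟨hy, hv₁⟩)])
        simpa using this
      have key2 : ∀ u, u ∈ A → u ≠ z₀ → G₂.degree u ≤ a - 1 := by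
        intro u hu' hne
        have := degsplit G₂ A B hab u hu' ∅
          (fun w hw hwB => absurd (hX u w (Or.inl ⟨hw, hwB⟩)) hne)
        simpa [hA] using this
      have key3 : ∀ u, u ∈ A → u ≠ z₀ → G₃.degree u ≤ a - 1 := by
        intro u hu' hne
        have := degsplit G₃ A B hab u hu' ∅
          (fun w hw hwB => absurd (hX u w (Or.inr ⟨hw, hwB⟩)) hne)
        simpa [hA] using this
      have hd2u : G₂.degree u₁ + G₂.degree u₂ ≤ (a - 1) + (a - 1) + b := by
        rcases eq_or_ne u₁ z₀ with h1 | h1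
        · have b1 := d2uB u₁ hu₁
          have b2 := key2 u₂ hu₂ (fun h => hu (h1.trans h.symm))
          omega
        · have b1 := key2 u₁ hu₁ h1
          have b2 := d2uB u₂ hu₂
          omega
      have hd3u : G₃.degree u₁ + G₃.degree u₂ ≤ (a - 1) + (a - 1) + b := by
        rcases eq_or_ne u₁ z₀ with h1 | h1
        · have b1 := d3uB u₁ hu₁
          have b2 := key3 u₂ hu₂ (fun h => hu (h1.trans h.symm))
          omega
        · have b1 := key3 u₁ hu₁ h1
          have b2 := d3uB u₂ hu₂
          omega
      refine le_trans ?_ (le_max_right (6 * a + 2) (5 * a + 2 * b + 2))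
      omega
    · -- Case 3: two B-edges with distinct A-endpoints exist
      push_neg at hX
      obtain ⟨z₁, w₁, hE₁, hz₁⟩ := hX
      have hz₁A : z₁ ∈ A := by
        rcases hE₁ with ⟨h, hw⟩ | ⟨h, hw⟩
        exacts [hA2' _ _ h hw, hA3' _ _ h hw]
      have hw₁B : w₁ ∈ B := by rcases hE₁ with ⟨_, hw⟩ | ⟨_, hw⟩ <;> exact hw
      have st₀ := star z₀ w₀ hE₀
      have st₁ := star z₁ w₁ hE₁
      have h1 : ∀ x, G₁.degree x ≤ 1 := by
        intro x
        by_cases hx : x = z₀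
        · have := degle G₁ x {z₁} (fun p hp => by
            rcases st₁ x p hp with h | h
            · exact absurd (h.symm.trans hx) hz₁
            · simp [h])
          simpa using this
        · have := degle G₁ x {z₀} (fun p hp => by
            rcases st₀ x p hp with h | h
            · exact absurd h hx
            · simp [h])
          simpa using this
      have h1u₁ := h1 u₁
      have h1u₂ := h1 u₂
      by_cases hV : ∀ y w, ((G₂.Adj y w ∧ w ∈ B) ∨ (G₃.Adj y w ∧ w ∈ B)) → w = w₀
      · -- Case 3a: all B-edges share the B-endpoint w₀
        have hd2u : ∀ u, u ∈ A → G₂.degree u ≤ a - 1 + 1 := by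
          intro u hu'
          have := degsplit G₂ A B hab u hu' {w₀}
            (fun w hw hwB => by simp [hV u w (Or.inl ⟨hw, hwB⟩)])
          simpa [hA] using this
        have hd3u : ∀ u, u ∈ A → G₃.degree u ≤ a - 1 + 1 := by
          intro u hu'
          have := degsplit G₃ A B hab u hu' {w₀}
            (fun w hw hwB => by simp [hV u w (Or.inr ⟨hw, hwB⟩)])
          simpa [hA] using this
        have b1 := hd2u u₁ hu₁
        have b2 := hd2u u₂ hu₂
        have b3 := hd3u u₁ hu₁
        have b4 := hd3u u₂ hu₂
        refine le_trans ?_ (le_max_left (6 * a + 2) (5 * a + 2 * b + 2))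
        omega
      · -- Case 3b: no common vertex
        push_neg at hV
        obtain ⟨y₂, w₂, hE₂, hw₂⟩ := hV
        have hy₂A : y₂ ∈ A := by
          rcases hE₂ with ⟨h, hw⟩ | ⟨h, hw⟩
          exacts [hA2' _ _ h hw, hA3' _ _ h hw]
        have hw₂B : w₂ ∈ B := by rcases hE₂ with ⟨_, hw⟩ | ⟨_, hw⟩ <;> exact hw
        by_cases hP2 : ∃ y w, G₂.Adj y w ∧ w ∈ B
        · by_cases hP3 : ∃ y w, G₃.Adj y w ∧ w ∈ B
          · -- both nonempty: structural lemma
            have hnocomm : ∀ p : V, ∃ y w,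
                ((G₂.Adj y w ∧ w ∈ B) ∨ (G₃.Adj y w ∧ w ∈ B)) ∧ p ≠ y ∧ p ≠ w := by
              intro p
              by_cases hp0 : p = z₀
              · exact ⟨z₁, w₁, hE₁, fun h => hz₁ (h.symm.trans hp0),
                  fun h => hdAB p (hp0 ▸ hz₀A) (h ▸ hw₁B)⟩
              · by_cases hp1 : p = w₀
                · exact ⟨y₂, w₂, hE₂, fun h => hdAB y₂ hy₂A (h ▸ (hp1 ▸ hw₀B)),
                    fun h => hw₂ ((h.symm.trans hp1))⟩
                · exact ⟨z₀, w₀, hE₀, hp0, hp1⟩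
            have hstruct := cross_struct (fun y w => G₂.Adj y w ∧ w ∈ B)
              (fun y w => G₃.Adj y w ∧ w ∈ B) cross23 hP2 hnocomm
            rcases hstruct with ⟨x, v, hL⟩ | ⟨x, x', v, v', hxx, hvv, hR⟩
            · -- G₂'s B-edges form a single edge (x, v)
              have hd2v : G₂.degree v₁ ≤ 1 := by
                have := deg_v_le G₂ v₁ {x}
                  (fun y hy => by simp [(hL y v₁ ⟨hy, hv₁⟩).1])
                simpa using this
              have hd2u : ∀ u, u ∈ A → G₂.degree u ≤ a - 1 + 1 := by
                intro u hu'
                have := degsplit G₂ A B hab u hu' {v}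
                  (fun w hw hwB => by simp [(hL u w ⟨hw, hwB⟩).2])
                simpa [hA] using this
              have b1 := hd2u u₁ hu₁
              have b2 := hd2u u₂ hu₂
              have b3 := d3uB u₁ hu₁
              have b4 := d3uB u₂ hu₂
              refine le_trans ?_ (le_max_right (6 * a + 2) (5 * a + 2 * b + 2))
              omega
            · -- G₃'s B-edges lie in {(x,v'), (x',v)}
              have hd3v : G₃.degree v₁ ≤ 1 := by
                rcases eq_or_ne v₁ v' with hcase | hcase
                · have := deg_v_le G₃ v₁ {x} (fun y hy => by
                    rcases hR y v₁ ⟨hy, hv₁⟩ with ⟨hy1, _⟩ | ⟨_, hy2⟩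
                    · simp [hy1]
                    · exact absurd (hy2.symm.trans hcase) hvv)
                  simpa using this
                · have := deg_v_le G₃ v₁ {x'} (fun y hy => by
                    rcases hR y v₁ ⟨hy, hv₁⟩ with ⟨_, hy2⟩ | ⟨hy1, _⟩
                    · exact absurd hy2 hcase
                    · simp [hy1])
                  simpa using this
              have hd3u : ∀ u, u ∈ A → G₃.degree u ≤ a - 1 + 1 := by
                intro u hu'
                rcases eq_or_ne u x with hcase | hcase
                · have := degsplit G₃ A B hab u hu' {v'} (fun w hw hwB => by
                    rcases hR u w ⟨hw, hwB⟩ with ⟨_, h2⟩ | ⟨h1, _⟩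
                    · simp [h2]
                    · exact absurd (hcase.symm.trans h1) hxx)
                  simpa [hA] using this
                · have := degsplit G₃ A B hab u hu' {v} (fun w hw hwB => by
                    rcases hR u w ⟨hw, hwB⟩ with ⟨h1, _⟩ | ⟨_, h2⟩
                    · exact absurd h1 hcase
                    · simp [h2])
                  simpa [hA] using this
              have b1 := hd3u u₁ hu₁
              have b2 := hd3u u₂ hu₂
              have b3 := d2uB u₁ hu₁
              have b4 := d2uB u₂ hu₂
              refine le_trans ?_ (le_max_right (6 * a + 2) (5 * a + 2 * b + 2))
              omega
          · -- G₃ has no B-edges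
            have hd3v : G₃.degree v₁ = 0 := by
              have := deg_v_le G₃ v₁ ∅
                (fun y hy => (hP3 ⟨y, v₁, hy, hv₁⟩).elim)
              simpa using this
            have hd3u : ∀ u, u ∈ A → G₃.degree u ≤ a - 1 := by
              intro u hu'
              have := degsplit G₃ A B hab u hu' ∅
                (fun w hw hwB => (hP3 ⟨u, w, hw, hwB⟩).elim)
              simpa [hA] using this
            have b1 := hd3u u₁ hu₁
            have b2 := hd3u u₂ hu₂
            have b3 := d2uB u₁ hu₁
            have b4 := d2uB u₂ hu₂
            refine le_trans ?_ (le_max_right (6 * a + 2) (5 * a + 2 * b + 2))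
            omega
        · -- G₂ has no B-edges
          have hd2v : G₂.degree v₁ = 0 := by
            have := deg_v_le G₂ v₁ ∅
              (fun y hy => (hP2 ⟨y, v₁, hy, hv₁⟩).elim)
            simpa using this
          have hd2u : ∀ u, u ∈ A → G₂.degree u ≤ a - 1 := by
            intro u hu'
            have := degsplit G₂ A B hab u hu' ∅
              (fun w hw hwB => (hP2 ⟨u, w, hw, hwB⟩).elim)
            simpa [hA] using this
          have b1 := hd2u u₁ hu₁
          have b2 := hd2u u₂ hu₂
          have b3 := d3uB u₁ hu₁
          have b4 := d3uB u₂ hu₂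
          refine le_trans ?_ (le_max_right (6 * a + 2) (5 * a + 2 * b + 2))
          omega
  · -- Case 1: no B-edges at all
    have hd2v : G₂.degree v₁ = 0 := by
      have := deg_v_le G₂ v₁ ∅
        (fun y hy => (hP ⟨y, v₁, Or.inl ⟨hy, hv₁⟩⟩).elim)
      simpa using this
    have hd3v : G₃.degree v₁ = 0 := by
      have := deg_v_le G₃ v₁ ∅
        (fun y hy => (hP ⟨y, v₁, Or.inr ⟨hy, hv₁⟩⟩).elim)
      simpa using this
    have hd2u : ∀ u, u ∈ A → G₂.degree u ≤ a - 1 := by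
      intro u hu'
      have := degsplit G₂ A B hab u hu' ∅
        (fun w hw hwB => (hP ⟨u, w, Or.inl ⟨hw, hwB⟩⟩).elim)
      simpa [hA] using this
    have hd3u : ∀ u, u ∈ A → G₃.degree u ≤ a - 1 := by
      intro u hu'
      have := degsplit G₃ A B hab u hu' ∅
        (fun w hw hwB => (hP ⟨u, w, Or.inr ⟨hw, hwB⟩⟩).elim)
      simpa [hA] using this
    have b1 := hd2u u₁ hu₁
    have b2 := hd2u u₂ hu₂
    have b3 := hd3u u₁ hu₁
    have b4 := hd3u u₂ hu₂
    have b5 := d1u u₁ hu₁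
    have b6 := d1u u₂ hu₂
    refine le_trans ?_ (le_max_left (6 * a + 2) (5 * a + 2 * b + 2))
    omega
end

section
/- Let $A = \{u_1, \ldots, u_a\}$ and $B = \{v_1, \ldots, v_b\}$ be disjoint vertex sets with $a \geq 2$, $b \geq 1$, and let $G_1, G_2, G_3$ be graphs on $A \cup B$. Suppose: every vertex of $B$ is isolated in $G_1$; every edge of $G_2$ and of $G_3$ contains at least one vertex of $A$; every edge of $G_1$ intersects every edge of $G_j$ that contains a vertex of $B$, for $j = 2, 3$; and every edge of $G_2$ containing a vertex of $B$ intersects every edge of $G_3$ containing a vertex of $B$. Then $\sum_{i=1}^{3}\left(\deg_{G_i}(u_1) + \deg_{G_i}(u_2) + 2\deg_{G_i}(v_1)\right) \leq \max\{8a+2,\; 6a+2b+4\}$. -/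
open Finset

section Aux

variable {V : Type*} [Fintype V] [DecidableEq V]

private lemma deg_split (A B : Finset V) (hAB : Disjoint A B) (hcover : A ∪ B = Finset.univ)
    (G : SimpleGraph V) [DecidableRel G.Adj] (u : V) :
    G.degree u = (G.neighborFinset u ∩ A).card + (G.neighborFinset u ∩ B).card := by
  rw [← SimpleGraph.card_neighborFinset_eq_degree,
    ← Finset.card_union_of_disjoint (hAB.mono inter_subset_right inter_subset_right),
    ← Finset.inter_union_distrib_left, hcover, Finset.inter_univ]

private lemma cross_pair (A B : Finset V) (hAB : Disjoint A B)
    (G H : SimpleGraph V) [DecidableRel G.Adj] [DecidableRel H.Adj]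
    (h : ∀ x y z w : V, G.Adj x y → (x ∈ B ∨ y ∈ B) → H.Adj z w → (z ∈ B ∨ w ∈ B) →
      (({x, y} : Finset V) ∩ {z, w}).Nonempty)
    (u u' : V) (hu : u ∈ A) (hu' : u' ∈ A) (huu' : u ≠ u') :
    (G.neighborFinset u ∩ B).card + (H.neighborFinset u' ∩ B).card ≤ B.card + 1 := by
  have key : ∀ x ∈ G.neighborFinset u ∩ B, ∀ y ∈ H.neighborFinset u' ∩ B, x = y := by
    intro x hx y hy
    simp only [mem_inter, SimpleGraph.mem_neighborFinset] at hx hy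
    obtain ⟨z, hz⟩ := h u x u' y hx.1 (Or.inr hx.2) hy.1 (Or.inr hy.2)
    simp only [mem_inter, mem_insert, mem_singleton] at hz
    rcases hz with ⟨h1 | h1, h2 | h2⟩
    · exact absurd (h1 ▸ h2) huu'
    · exact absurd (h1 ▸ h2 ▸ hy.2) (Finset.disjoint_left.mp hAB hu)
    · exact absurd (h2 ▸ h1 ▸ hx.2) (Finset.disjoint_left.mp hAB hu')
    · exact h1 ▸ h2
  by_cases hX : (G.neighborFinset u ∩ B).card ≤ 1
  · have : (H.neighborFinset u' ∩ B).card ≤ B.card := card_le_card inter_subset_right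
    omega
  · push_neg at hX
    obtain ⟨x₁, hx₁, x₂, hx₂, hne⟩ := Finset.one_lt_card.mp hX
    have hY : H.neighborFinset u' ∩ B = ∅ := by
      rw [eq_empty_iff_forall_notMem]
      intro y hy
      exact hne ((key x₁ hx₁ y hy).trans (key x₂ hx₂ y hy).symm)
    have : (G.neighborFinset u ∩ B).card ≤ B.card := card_le_card inter_subset_right
    rw [hY, card_empty]
    omega

/-- If `H` has two edges from `v ∈ B`, then every `B`-neighbor of a vertex `u ∈ A`
in `G` must be `v`. -/
private lemma two_edges_forces (A B : Finset V) (hAB : Disjoint A B)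
    (G H : SimpleGraph V) [DecidableRel G.Adj] [DecidableRel H.Adj]
    (hAH : ∀ x y : V, H.Adj x y → x ∈ A ∨ y ∈ A)
    (h : ∀ x y z w : V, G.Adj x y → (x ∈ B ∨ y ∈ B) → H.Adj z w → (z ∈ B ∨ w ∈ B) →
      (({x, y} : Finset V) ∩ {z, w}).Nonempty)
    (v : V) (hv : v ∈ B) (w w' : V) (hw : H.Adj v w) (hw' : H.Adj v w') (hww' : w ≠ w')
    (u : V) (hu : u ∈ A) :
    G.neighborFinset u ∩ B ⊆ {v} := by
  intro x hx
  simp only [mem_inter, SimpleGraph.mem_neighborFinset] at hx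
  have get : ∀ t : V, H.Adj v t → u = t ∨ x = v := by
    intro t ht
    have htA : t ∈ A := by
      rcases hAH v t ht with h' | h'
      · exact absurd h' (Finset.disjoint_right.mp hAB hv)
      · exact h'
    obtain ⟨z, hz⟩ := h u x v t hx.1 (Or.inr hx.2) ht (Or.inl hv)
    simp only [mem_inter, mem_insert, mem_singleton] at hz
    rcases hz with ⟨h1 | h1, h2 | h2⟩
    · exact absurd (h1 ▸ h2 ▸ hv) (Finset.disjoint_left.mp hAB hu)
    · exact Or.inl (h1 ▸ h2)
    · exact Or.inr (h1 ▸ h2)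
    · have hxt : x = t := h1.symm.trans h2
      rw [hxt] at hx
      exact absurd htA (Finset.disjoint_right.mp hAB hx.2)
  rw [mem_singleton]
  rcases get w hw with h1 | h1
  · rcases get w' hw' with h2 | h2
    · exact absurd (h1 ▸ h2) hww'
    · exact h2
  · exact h1

/-- If `H` has two edges from `v ∈ B` and every edge of `G₁` meets every
`B`-touching edge of `H`, then every vertex has `G₁`-degree at most 1. -/
private lemma two_edges_G1 (A B : Finset V) (hAB : Disjoint A B)
    (G₁ H : SimpleGraph V) [DecidableRel G₁.Adj] [DecidableRel H.Adj]
    (hG1A : ∀ x y : V, G₁.Adj x y → x ∈ A ∧ y ∈ A)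
    (h : ∀ x y z w : V, G₁.Adj x y → H.Adj z w → (z ∈ B ∨ w ∈ B) →
      (({x, y} : Finset V) ∩ {z, w}).Nonempty)
    (v : V) (hv : v ∈ B) (w w' : V) (hw : H.Adj v w) (hw' : H.Adj v w') (hww' : w ≠ w')
    (u : V) :
    G₁.degree u ≤ 1 := by
  rw [← SimpleGraph.card_neighborFinset_eq_degree]
  have get : ∀ z ∈ G₁.neighborFinset u, ∀ t : V, H.Adj v t → u = t ∨ z = t := by
    intro z hz t ht
    rw [SimpleGraph.mem_neighborFinset] at hz
    obtain ⟨c, hc⟩ := h u z v t hz ht (Or.inl hv)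
    simp only [mem_inter, mem_insert, mem_singleton] at hc
    rcases hc with ⟨h1 | h1, h2 | h2⟩
    · exact absurd (h1 ▸ h2 ▸ hv) (Finset.disjoint_left.mp hAB (hG1A u z hz).1)
    · exact Or.inl (h1 ▸ h2)
    · exact absurd (h1 ▸ h2 ▸ hv) (Finset.disjoint_left.mp hAB (hG1A u z hz).2)
    · exact Or.inr (h1 ▸ h2)
  by_cases huw : u = w
  · have hsub : G₁.neighborFinset u ⊆ {w'} := by
      intro z hz
      rcases get z hz w' hw' with h1 | h1
      · exact absurd (huw ▸ h1) hww'
      · simp [h1]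
    calc _ ≤ ({w'} : Finset V).card := card_le_card hsub
      _ = 1 := card_singleton _
  · have hsub : G₁.neighborFinset u ⊆ {w} := by
      intro z hz
      rcases get z hz w hw with h1 | h1
      · exact absurd h1 huw
      · simp [h1]
    calc _ ≤ ({w} : Finset V).card := card_le_card hsub
      _ = 1 := card_singleton _

end Aux

/-- weighted variant, Lemma 3.8 of the paper. -/
theorem stmt8 {V : Type*} [Fintype V] [DecidableEq V]
    (A B : Finset V) (hAB : Disjoint A B) (hcover : A ∪ B = Finset.univ)
    (a b : ℕ) (hA : A.card = a) (hB : B.card = b) (ha : 2 ≤ a) (hb : 1 ≤ b)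
    (u₁ u₂ : V) (hu₁ : u₁ ∈ A) (hu₂ : u₂ ∈ A) (hu : u₁ ≠ u₂)
    (v₁ : V) (hv₁ : v₁ ∈ B)
    (G₁ G₂ G₃ : SimpleGraph V)
    [DecidableRel G₁.Adj] [DecidableRel G₂.Adj] [DecidableRel G₃.Adj]
    (hBiso : ∀ v ∈ B, ∀ w : V, ¬ G₁.Adj v w)
    (hA2 : ∀ x y : V, G₂.Adj x y → x ∈ A ∨ y ∈ A)
    (hA3 : ∀ x y : V, G₃.Adj x y → x ∈ A ∨ y ∈ A)
    (h12 : ∀ x y z w : V, G₁.Adj x y → G₂.Adj z w → (z ∈ B ∨ w ∈ B) →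
      (({x, y} : Finset V) ∩ {z, w}).Nonempty)
    (h13 : ∀ x y z w : V, G₁.Adj x y → G₃.Adj z w → (z ∈ B ∨ w ∈ B) →
      (({x, y} : Finset V) ∩ {z, w}).Nonempty)
    (h23 : ∀ x y z w : V, G₂.Adj x y → (x ∈ B ∨ y ∈ B) → G₃.Adj z w → (z ∈ B ∨ w ∈ B) →
      (({x, y} : Finset V) ∩ {z, w}).Nonempty) :
    (G₁.degree u₁ + G₁.degree u₂ + 2 * G₁.degree v₁) +
    (G₂.degree u₁ + G₂.degree u₂ + 2 * G₂.degree v₁) +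
    (G₃.degree u₁ + G₃.degree u₂ + 2 * G₃.degree v₁) ≤
      max (8 * a + 2) (6 * a + 2 * b + 4) := by
  have hmem : ∀ x : V, x ∈ A ∨ x ∈ B := by
    intro x
    have : x ∈ A ∪ B := hcover ▸ mem_univ x
    exact mem_union.mp this
  have hv₁A : v₁ ∉ A := fun h => Finset.disjoint_left.mp hAB h hv₁
  have hG1A : ∀ x y : V, G₁.Adj x y → x ∈ A ∧ y ∈ A := by
    intro x y hxy
    constructor
    · rcases hmem x with h | h
      · exact h
      · exact absurd hxy (hBiso x h y)
    · rcases hmem y with h | h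
      · exact h
      · exact absurd hxy.symm (hBiso y h x)
  have h32 : ∀ x y z w : V, G₃.Adj x y → (x ∈ B ∨ y ∈ B) → G₂.Adj z w → (z ∈ B ∨ w ∈ B) →
      (({x, y} : Finset V) ∩ {z, w}).Nonempty := by
    intro x y z w h1 h2 h3 h4
    have := h23 z w x y h3 h4 h1 h2
    rwa [inter_comm] at this
  -- G₁ facts
  have d1v : G₁.degree v₁ = 0 := by
    rw [← SimpleGraph.card_neighborFinset_eq_degree, card_eq_zero,
      eq_empty_iff_forall_notMem]
    intro w hw
    exact hBiso v₁ hv₁ w ((SimpleGraph.mem_neighborFinset _ _ _).mp hw)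
  have hNsub : ∀ u ∈ A, G₁.degree u ≤ a - 1 := by
    intro u hu'
    rw [← SimpleGraph.card_neighborFinset_eq_degree]
    have hsub : G₁.neighborFinset u ⊆ A.erase u := by
      intro w hw
      rw [SimpleGraph.mem_neighborFinset] at hw
      exact mem_erase.mpr ⟨hw.ne', (hG1A _ _ hw).2⟩
    calc _ ≤ (A.erase u).card := card_le_card hsub
      _ = a - 1 := by rw [card_erase_of_mem hu', hA]
  have d1u₁ : G₁.degree u₁ ≤ a - 1 := hNsub u₁ hu₁
  have d1u₂ : G₁.degree u₂ ≤ a - 1 := hNsub u₂ hu₂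
  -- α bounds
  have alphaBound : ∀ (G : SimpleGraph V) [DecidableRel G.Adj], ∀ u ∈ A,
      (G.neighborFinset u ∩ A).card ≤ a - 1 := by
    intro G _ u hu'
    have hsub : G.neighborFinset u ∩ A ⊆ A.erase u := by
      intro w hw
      rw [mem_inter, SimpleGraph.mem_neighborFinset] at hw
      exact mem_erase.mpr ⟨hw.1.ne', hw.2⟩
    calc _ ≤ (A.erase u).card := card_le_card hsub
      _ = a - 1 := by rw [card_erase_of_mem hu', hA]
  have betaTriv : ∀ (G : SimpleGraph V) [DecidableRel G.Adj], ∀ u : V,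
      (G.neighborFinset u ∩ B).card ≤ b := by
    intro G _ u
    calc (G.neighborFinset u ∩ B).card ≤ B.card := card_le_card inter_subset_right
      _ = b := hB
  -- degree splits
  have e2u₁ := deg_split A B hAB hcover G₂ u₁
  have e2u₂ := deg_split A B hAB hcover G₂ u₂
  have e3u₁ := deg_split A B hAB hcover G₃ u₁
  have e3u₂ := deg_split A B hAB hcover G₃ u₂
  have a2u₁ := alphaBound G₂ u₁ hu₁
  have a2u₂ := alphaBound G₂ u₂ hu₂
  have a3u₁ := alphaBound G₃ u₁ hu₁
  have a3u₂ := alphaBound G₃ u₂ hu₂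
  have b2u₁ := betaTriv G₂ u₁
  have b2u₂ := betaTriv G₂ u₂
  have b3u₁ := betaTriv G₃ u₁
  have b3u₂ := betaTriv G₃ u₂
  -- v₁ degrees in G₂, G₃
  have dv2A : G₂.neighborFinset v₁ ⊆ A := by
    intro w hw
    rw [SimpleGraph.mem_neighborFinset] at hw
    rcases hA2 _ _ hw with h | h
    · exact absurd h hv₁A
    · exact h
  have dv3A : G₃.neighborFinset v₁ ⊆ A := by
    intro w hw
    rw [SimpleGraph.mem_neighborFinset] at hw
    rcases hA3 _ _ hw with h | h
    · exact absurd h hv₁A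
    · exact h
  have dv2 : G₂.degree v₁ ≤ a := by
    rw [← SimpleGraph.card_neighborFinset_eq_degree]
    calc _ ≤ A.card := card_le_card dv2A
      _ = a := hA
  have dv3 : G₃.degree v₁ ≤ a := by
    rw [← SimpleGraph.card_neighborFinset_eq_degree]
    calc _ ≤ A.card := card_le_card dv3A
      _ = a := hA
  by_cases h2big : 2 ≤ G₂.degree v₁
  · obtain ⟨w₂, hw₂m, w₂', hw₂'m, hw₂ne⟩ := Finset.one_lt_card.mp
      (show 1 < (G₂.neighborFinset v₁).card by
        rw [SimpleGraph.card_neighborFinset_eq_degree]; omega)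
    have hw₂ : G₂.Adj v₁ w₂ := (SimpleGraph.mem_neighborFinset _ _ _).mp hw₂m
    have hw₂' : G₂.Adj v₁ w₂' := (SimpleGraph.mem_neighborFinset _ _ _).mp hw₂'m
    -- β₃(u) ≤ 1 for u ∈ A, and G₁ degrees ≤ 1
    have b3small : ∀ u ∈ A, (G₃.neighborFinset u ∩ B).card ≤ 1 := by
      intro u hu'
      calc _ ≤ ({v₁} : Finset V).card := card_le_card
            (two_edges_forces A B hAB G₃ G₂ hA2 h32 v₁ hv₁ w₂ w₂' hw₂ hw₂' hw₂ne u hu')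
        _ = 1 := card_singleton _
    have d1small : ∀ u : V, G₁.degree u ≤ 1 := fun u =>
      two_edges_G1 A B hAB G₁ G₂ hG1A h12 v₁ hv₁ w₂ w₂' hw₂ hw₂' hw₂ne u
    have b3u₁' := b3small u₁ hu₁
    have b3u₂' := b3small u₂ hu₂
    have d1u₁' := d1small u₁
    have d1u₂' := d1small u₂
    by_cases h3big : 2 ≤ G₃.degree v₁
    · -- also two edges in G₃ at v₁, so β₂ small too; bound by 8a+2
      obtain ⟨w₃, hw₃m, w₃', hw₃'m, hw₃ne⟩ := Finset.one_lt_card.mp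
        (show 1 < (G₃.neighborFinset v₁).card by
          rw [SimpleGraph.card_neighborFinset_eq_degree]; omega)
      have hw₃ : G₃.Adj v₁ w₃ := (SimpleGraph.mem_neighborFinset _ _ _).mp hw₃m
      have hw₃' : G₃.Adj v₁ w₃' := (SimpleGraph.mem_neighborFinset _ _ _).mp hw₃'m
      have b2small : ∀ u ∈ A, (G₂.neighborFinset u ∩ B).card ≤ 1 := by
        intro u hu'
        calc _ ≤ ({v₁} : Finset V).card := card_le_card
              (two_edges_forces A B hAB G₂ G₃ hA3 h23 v₁ hv₁ w₃ w₃' hw₃ hw₃' hw₃ne u hu')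
          _ = 1 := card_singleton _
      have b2u₁' := b2small u₁ hu₁
      have b2u₂' := b2small u₂ hu₂
      refine le_trans ?_ (le_max_left _ _)
      omega
    · -- G₃.degree v₁ ≤ 1
      refine le_trans ?_ (le_max_right _ _)
      omega
  · by_cases h3big : 2 ≤ G₃.degree v₁
    · obtain ⟨w₃, hw₃m, w₃', hw₃'m, hw₃ne⟩ := Finset.one_lt_card.mp
        (show 1 < (G₃.neighborFinset v₁).card by
          rw [SimpleGraph.card_neighborFinset_eq_degree]; omega)
      have hw₃ : G₃.Adj v₁ w₃ := (SimpleGraph.mem_neighborFinset _ _ _).mp hw₃m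
      have hw₃' : G₃.Adj v₁ w₃' := (SimpleGraph.mem_neighborFinset _ _ _).mp hw₃'m
      have b2small : ∀ u ∈ A, (G₂.neighborFinset u ∩ B).card ≤ 1 := by
        intro u hu'
        calc _ ≤ ({v₁} : Finset V).card := card_le_card
              (two_edges_forces A B hAB G₂ G₃ hA3 h23 v₁ hv₁ w₃ w₃' hw₃ hw₃' hw₃ne u hu')
          _ = 1 := card_singleton _
      have d1small : ∀ u : V, G₁.degree u ≤ 1 := fun u =>
        two_edges_G1 A B hAB G₁ G₃ hG1A h13 v₁ hv₁ w₃ w₃' hw₃ hw₃' hw₃ne u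
      have b2u₁' := b2small u₁ hu₁
      have b2u₂' := b2small u₂ hu₂
      have d1u₁' := d1small u₁
      have d1u₂' := d1small u₂
      refine le_trans ?_ (le_max_right _ _)
      omega
    · -- both v₁-degrees small; use cross pair bounds
      have c1 := cross_pair A B hAB G₂ G₃ h23 u₁ u₂ hu₁ hu₂ hu
      have c2 := cross_pair A B hAB G₂ G₃ h23 u₂ u₁ hu₂ hu₁ hu.symm
      rw [hB] at c1 c2
      refine le_trans ?_ (le_max_right _ _)
      omega
end
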